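/- arXiv:1604.03794 — 7 statements merged into one kernel-verified Lean document; each statement's English description precedes it below -/
import Mathlib

section
/- For any real numbers l₁, l₂, l₃ with l₁ > 0, l₂ > 0, l₃ > 0, there exist noncollinear points A, B, C in EuclideanSpace ℝ (Fin 2) such that the bisector lengths satisfy t_A = l₂, t_B = l₁ and t_C = l₃. (Existence of a triangle with three prescribed angle-bisector lengths.) -/
/-!
Write the sides as `a = y + z`, `b = z + x`, `c = x + y` with `x, y, z > 0` (Ravi substitution).
Then `t_A ^ 2 = 4 x (x + y) (x + z) (x + y + z) / (2 x + y + z) ^ 2`, which is strictly increasing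
in `x` and nondecreasing in `y` and `z`. Solving `t_A = l` for `x` gives `x = ψ_l (y, z)`, so the
prescribed bisectors correspond to a fixed point of the map
`F (x, y, z) = (ψ_{l₂} (y, z), ψ_{l₁} (z, x), ψ_{l₃} (x, y))` on the positive octant.
`F` is antitone and bounded, so `F ∘ F` has a fixed point `p` by Knaster–Tarski, and `(p, F p)`
is a 2-cycle of `F`. Homogeneity of `t_A` makes `F` strictly subhomogeneous,
`F (t • w) > t⁻¹ • F w` for `t > 1`, and this rules out 2-cycles other than fixed points.
-/

open EuclideanGeometry Real

/-- The length of the internal angle bisector from vertex `A` in triangle `A B C`: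
the distance from `A` to the point on `BC` dividing it in ratio `AB : AC`. -/
noncomputable def bisectorLength (A B C : EuclideanSpace ℝ (Fin 2)) : ℝ :=
  dist A (((dist C A) / (dist C A + dist A B)) • B + ((dist A B) / (dist C A + dist A B)) • C)

open Set Function

section PositiveOrthant

variable {ι : Type*} {F : (ι → ℝ) → ι → ℝ}

theorem exists_pos_isFixedPt_comp_self_of_antitoneOn {M : ι → ℝ}
    (hmaps : MapsTo F {w | ∀ i, 0 < w i} {w | ∀ i, 0 < w i})
    (hanti : AntitoneOn F {w | ∀ i, 0 < w i}) (hM : ∀ w, (∀ i, 0 < w i) → F w ≤ M) :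
    ∃ w, (∀ i, 0 < w i) ∧ IsFixedPt (F ∘ F) w := by
  have hMpos : ∀ i, 0 < M i := fun i =>
    (hmaps (fun _ => one_pos) i).trans_le (hM 1 (fun _ => one_pos) i)
  have hbox : Icc (F M) M ⊆ {w | ∀ i, 0 < w i} := fun w hw i => (hmaps hMpos i).trans_le (hw.1 i)
  have hFbox : MapsTo F (Icc (F M) M) (Icc (F M) M) := fun w hw =>
    ⟨hanti (hbox hw) hMpos hw.2, hM w (hbox hw)⟩
  have : Fact (F M ≤ M) := ⟨hM M hMpos⟩
  let G : Icc (F M) M →o Icc (F M) M :=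
    { toFun := fun w => ⟨F (F w), hFbox (hFbox w.2)⟩
      monotone' := fun v w hvw =>
        hanti (hbox (hFbox w.2)) (hbox (hFbox v.2)) (hanti (hbox v.2) (hbox w.2) hvw) }
  exact ⟨G.lfp, hbox G.lfp.2, congrArg Subtype.val G.map_lfp⟩

theorem le_of_antitoneOn_of_lt_mul_smul [Finite ι] (hanti : AntitoneOn F {w | ∀ i, 0 < w i})
    (hsub : ∀ w, (∀ i, 0 < w i) → ∀ t : ℝ, 1 < t → ∀ i, F w i < t * F (t • w) i)
    {p q : ι → ℝ} (hp : ∀ i, 0 < p i) (hq : ∀ i, 0 < q i) (hFp : F p = q) (hFq : F q = p) :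
    q ≤ p := by
  cases isEmpty_or_nonempty ι
  · exact fun i => isEmptyElim i
  -- `t` is the least factor with `q ≤ t • p`; if `t > 1` it is attained at `i₀`, but
  -- `q = F p < t • F (t • p) ≤ t • F q = t • p` there.
  obtain ⟨i₀, hi₀⟩ := Finite.exists_max fun i => q i / p i
  set t := q i₀ / p i₀
  have hqt : q ≤ t • p := fun i => (div_le_iff₀ (hp i)).1 (hi₀ i)
  rcases le_or_gt t 1 with ht | ht
  · exact fun i => (hqt i).trans (mul_le_of_le_one_left (hp i).le ht)
  have htp : ∀ i, 0 < (t • p) i := fun i => mul_pos (one_pos.trans ht) (hp i)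
  have hq_lt := hsub p hp t ht i₀
  rw [hFp] at hq_lt
  have hFtp := mul_le_mul_of_nonneg_left (hFq ▸ hanti hq htp hqt i₀) (one_pos.trans ht).le
  have hqi₀ : q i₀ = t * p i₀ := (div_mul_cancel₀ _ (hp i₀).ne').symm
  linarith

theorem exists_pos_isFixedPt_of_antitoneOn [Finite ι] {M : ι → ℝ}
    (hmaps : MapsTo F {w | ∀ i, 0 < w i} {w | ∀ i, 0 < w i})
    (hanti : AntitoneOn F {w | ∀ i, 0 < w i}) (hM : ∀ w, (∀ i, 0 < w i) → F w ≤ M)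
    (hsub : ∀ w, (∀ i, 0 < w i) → ∀ t : ℝ, 1 < t → ∀ i, F w i < t * F (t • w) i) :
    ∃ w, (∀ i, 0 < w i) ∧ IsFixedPt F w := by
  obtain ⟨p, hp, hFFp⟩ := exists_pos_isFixedPt_comp_self_of_antitoneOn hmaps hanti hM
  have hFp : ∀ i, 0 < F p i := hmaps hp
  exact ⟨p, hp, le_antisymm (le_of_antitoneOn_of_lt_mul_smul hanti hsub hp hFp rfl hFFp)
    (le_of_antitoneOn_of_lt_mul_smul hanti hsub hFp hp hFFp rfl)⟩

end PositiveOrthant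

theorem dist_smul_add_smul_sq {E : Type*} [NormedAddCommGroup E] [InnerProductSpace ℝ E]
    (a b c : E) {β γ : ℝ} (h : β + γ = 1) :
    dist a (β • b + γ • c) ^ 2 = β * dist a b ^ 2 + γ * dist a c ^ 2 - β * γ * dist b c ^ 2 := by
  obtain rfl : γ = 1 - β := by linarith
  have hsplit : a - (β • b + (1 - β) • c) = β • (a - b) + (1 - β) • (a - c) := by module
  have hbc : b - c = (a - c) - (a - b) := by abel
  rw [dist_eq_norm, dist_eq_norm, dist_eq_norm, dist_eq_norm, hsplit, hbc, norm_add_sq_real,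
    norm_sub_sq_real (a - c), norm_smul, norm_smul, real_inner_smul_left, real_inner_smul_right,
    real_inner_comm (a - b), Real.norm_eq_abs, Real.norm_eq_abs, mul_pow, mul_pow, sq_abs, sq_abs]
  ring

theorem EuclideanSpace.dist_vec₂ (a b c d : ℝ) :
    dist !₂[a, b] !₂[c, d] = √((a - c) ^ 2 + (b - d) ^ 2) := by
  simp [EuclideanSpace.dist_eq, Fin.sum_univ_two, Real.dist_eq, sq_abs]

theorem not_collinear_of_dist_lt_dist_add_dist {V P : Type*} [NormedAddCommGroup V]
    [NormedSpace ℝ V] [MetricSpace P] [NormedAddTorsor V P] {A B C : P}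
    (hA : dist B C < dist C A + dist A B) (hB : dist C A < dist A B + dist B C)
    (hC : dist A B < dist B C + dist C A) : ¬ Collinear ℝ {A, B, C} := by
  intro h
  rcases h.wbtw_or_wbtw_or_wbtw with h | h | h
  · have := h.dist_add_dist; rw [dist_comm A C] at this; linarith
  · have := h.dist_add_dist; rw [dist_comm B A] at this; linarith
  · have := h.dist_add_dist; rw [dist_comm C B] at this; linarith

theorem exists_dist_eq_of_lt_add {a b c : ℝ} (ha : a < b + c) (hb : b < c + a) (hc : c < a + b) :
    ∃ A B C : EuclideanSpace ℝ (Fin 2), dist B C = a ∧ dist C A = b ∧ dist A B = c := by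
  have ha₀ : 0 < a := by linarith
  set p := (a ^ 2 + c ^ 2 - b ^ 2) / (2 * a)
  have hh : 0 < c ^ 2 - p ^ 2 := by
    have : c ^ 2 - p ^ 2 = (b + c - a) * (c + a - b) * (a + b - c) * (a + b + c) / (4 * a ^ 2) := by
      simp only [p]; field_simp; ring
    rw [this]
    apply div_pos _ (by positivity)
    apply mul_pos (mul_pos (mul_pos _ _) _) _ <;> linarith
  have hp : 2 * a * p = a ^ 2 + c ^ 2 - b ^ 2 := by simp only [p]; field_simp
  set h := √(c ^ 2 - p ^ 2)
  have hh2 : h ^ 2 = c ^ 2 - p ^ 2 := Real.sq_sqrt hh.le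
  refine ⟨!₂[p, h], !₂[0, 0], !₂[a, 0], ?_, ?_, ?_⟩ <;>
    rw [EuclideanSpace.dist_vec₂, Real.sqrt_eq_iff_mul_self_eq_of_pos (by linarith)]
  · ring
  · linear_combination hp - hh2
  · linear_combination -hh2

/-- With sides `a = y + z`, `b = z + x`, `c = x + y`, the squared bisector from `A`,
`b c ((b + c) ^ 2 - a ^ 2) / (b + c) ^ 2`, equals `bisectorSq x y z`. -/
noncomputable def bisectorSq (x y z : ℝ) : ℝ :=
  4 * x * (x + y) * (x + z) * (x + y + z) / (2 * x + y + z) ^ 2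

theorem bisectorSq_div_self_lt {x₁ x₂ y z : ℝ} (hx₁ : 0 < x₁) (h : x₁ < x₂) (hy : 0 ≤ y)
    (hz : 0 ≤ z) : bisectorSq x₁ y z / x₁ < bisectorSq x₂ y z / x₂ := by
  have hx₂ : 0 < x₂ := hx₁.trans h
  have hdiv (x : ℝ) (hx : 0 < x) :
      bisectorSq x y z / x = 4 * (x + y) * (x + z) * (x + y + z) / (2 * x + y + z) ^ 2 := by
    unfold bisectorSq; field_simp
  rw [hdiv x₁ hx₁, hdiv x₂ hx₂, div_lt_div_iff₀ (by positivity) (by positivity)]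
  obtain ⟨e, he, rfl⟩ : ∃ e, 0 < e ∧ x₂ = x₁ + e := ⟨x₂ - x₁, by linarith, by ring⟩
  rw [← sub_pos]
  ring_nf
  positivity

theorem bisectorSq_strictMonoOn {y z : ℝ} (hy : 0 ≤ y) (hz : 0 ≤ z) :
    StrictMonoOn (fun x => bisectorSq x y z) (Ioi 0) := by
  intro x₁ (hx₁ : 0 < x₁) x₂ (hx₂ : 0 < x₂) h
  have hq₁ : 0 ≤ bisectorSq x₁ y z / x₁ := by unfold bisectorSq; positivity
  calc bisectorSq x₁ y z = x₁ * (bisectorSq x₁ y z / x₁) := by field_simp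
    _ < x₂ * (bisectorSq x₂ y z / x₂) :=
      mul_lt_mul'' h (bisectorSq_div_self_lt hx₁ h hy hz) hx₁.le hq₁
    _ = bisectorSq x₂ y z := by field_simp

theorem bisectorSq_le_bisectorSq_of_le {x y₁ y₂ z : ℝ} (hx : 0 < x) (hy₁ : 0 ≤ y₁) (h : y₁ ≤ y₂)
    (hz : 0 ≤ z) : bisectorSq x y₁ z ≤ bisectorSq x y₂ z := by
  obtain ⟨e, he, rfl⟩ : ∃ e, 0 ≤ e ∧ y₂ = y₁ + e := ⟨y₂ - y₁, by linarith, by ring⟩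
  unfold bisectorSq
  rw [div_le_div_iff₀ (by positivity) (by positivity), ← sub_nonneg]
  ring_nf
  positivity

theorem bisectorSq_comm (x y z : ℝ) : bisectorSq x y z = bisectorSq x z y := by
  unfold bisectorSq; ring

theorem bisectorSq_mul (t x y z : ℝ) :
    bisectorSq (t * x) (t * y) (t * z) = t ^ 2 * bisectorSq x y z := by
  unfold bisectorSq
  rcases eq_or_ne t 0 with rfl | ht
  · simp
  · field_simp

theorem sq_lt_bisectorSq {x y z : ℝ} (hx : 0 < x) (hy : 0 < y) (hz : 0 ≤ z) :
    x ^ 2 < bisectorSq x y z := by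
  unfold bisectorSq
  rw [lt_div_iff₀ (by positivity), ← sub_pos]
  ring_nf
  positivity

/-- For `u = 2 x + y + z` one has
`4 u ^ 2 * bisectorSq x y z = (u ^ 2 - (y + z) ^ 2) * (u ^ 2 - (y - z) ^ 2)`,
so `bisectorSq x y z = l ^ 2` is a quadratic equation in `u ^ 2`; take its larger root. -/
noncomputable def bisectorSqInv (l y z : ℝ) : ℝ :=
  (√((4 * l ^ 2 + (y + z) ^ 2 + (y - z) ^ 2 +
      √((4 * l ^ 2 + (y + z) ^ 2 + (y - z) ^ 2) ^ 2 - 4 * (y + z) ^ 2 * (y - z) ^ 2)) / 2)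
    - (y + z)) / 2

section bisectorSqInv

variable {l y z : ℝ}

theorem bisectorSqInv_spec (hl : 0 < l) (hy : 0 < y) (hz : 0 < z) :
    0 < bisectorSqInv l y z ∧ bisectorSq (bisectorSqInv l y z) y z = l ^ 2 := by
  set s := y + z
  set d := y - z
  have hs : 0 < s := by positivity
  have hdisc : (4 * l ^ 2 + s ^ 2 + d ^ 2) ^ 2 - 4 * s ^ 2 * d ^ 2
      = (s ^ 2 - d ^ 2 - 4 * l ^ 2) ^ 2 + 16 * l ^ 2 * s ^ 2 := by ring
  set r := √((4 * l ^ 2 + s ^ 2 + d ^ 2) ^ 2 - 4 * s ^ 2 * d ^ 2)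
  have hr : r ^ 2 = (4 * l ^ 2 + s ^ 2 + d ^ 2) ^ 2 - 4 * s ^ 2 * d ^ 2 :=
    Real.sq_sqrt (by rw [hdisc]; positivity)
  have hr_gt : s ^ 2 - d ^ 2 - 4 * l ^ 2 < r := by
    refine Real.lt_sqrt_of_sq_lt ?_
    rw [hdisc]; nlinarith [mul_pos (mul_pos hl hl) (mul_pos hs hs)]
  set u := √((4 * l ^ 2 + s ^ 2 + d ^ 2 + r) / 2)
  have hu : u ^ 2 = (4 * l ^ 2 + s ^ 2 + d ^ 2 + r) / 2 := Real.sq_sqrt (by positivity)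
  have hsu : s < u := Real.lt_sqrt hs.le |>.2 (by linarith)
  have hx : bisectorSqInv l y z = (u - s) / 2 := rfl
  refine ⟨by rw [hx]; linarith, ?_⟩
  rw [hx, bisectorSq, div_eq_iff (by positivity)]
  linear_combination (u ^ 2 + (r - (4 * l ^ 2 + s ^ 2 + d ^ 2)) / 2) / 4 * hu + hr / 16

theorem lt_bisectorSqInv_iff (hl : 0 < l) (hy : 0 < y) (hz : 0 < z) {x : ℝ} (hx : 0 < x) :
    x < bisectorSqInv l y z ↔ bisectorSq x y z < l ^ 2 := by
  obtain ⟨hpos, hsol⟩ := bisectorSqInv_spec hl hy hz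
  rw [← hsol]
  exact ((bisectorSq_strictMonoOn hy.le hz.le).lt_iff_lt hx hpos).symm

theorem bisectorSqInv_lt_iff (hl : 0 < l) (hy : 0 < y) (hz : 0 < z) {x : ℝ} (hx : 0 < x) :
    bisectorSqInv l y z < x ↔ l ^ 2 < bisectorSq x y z := by
  obtain ⟨hpos, hsol⟩ := bisectorSqInv_spec hl hy hz
  rw [← hsol]
  exact ((bisectorSq_strictMonoOn hy.le hz.le).lt_iff_lt hpos hx).symm

theorem bisectorSqInv_lt (hl : 0 < l) (hy : 0 < y) (hz : 0 < z) : bisectorSqInv l y z < l :=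
  (bisectorSqInv_lt_iff hl hy hz hl).2 (sq_lt_bisectorSq hl hy hz.le)

theorem bisectorSqInv_le_bisectorSqInv {y₁ y₂ z₁ z₂ : ℝ} (hl : 0 < l) (hy₁ : 0 < y₁) (hz₁ : 0 < z₁)
    (hy : y₁ ≤ y₂) (hz : z₁ ≤ z₂) : bisectorSqInv l y₂ z₂ ≤ bisectorSqInv l y₁ z₁ := by
  obtain ⟨hpos, hsol⟩ := bisectorSqInv_spec hl hy₁ hz₁
  rw [← not_lt, lt_bisectorSqInv_iff hl (hy₁.trans_le hy) (hz₁.trans_le hz) hpos, not_lt, ← hsol]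
  calc bisectorSq (bisectorSqInv l y₁ z₁) y₁ z₁
      ≤ bisectorSq (bisectorSqInv l y₁ z₁) y₂ z₁ :=
        bisectorSq_le_bisectorSq_of_le hpos hy₁.le hy hz₁.le
    _ ≤ bisectorSq (bisectorSqInv l y₁ z₁) y₂ z₂ := by
        rw [bisectorSq_comm _ y₂, bisectorSq_comm _ y₂]
        exact bisectorSq_le_bisectorSq_of_le hpos hz₁.le hz (hy₁.le.trans hy)

theorem bisectorSqInv_lt_mul_bisectorSqInv_mul (hl : 0 < l) (hy : 0 < y) (hz : 0 < z) {t : ℝ}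
    (ht : 1 < t) : bisectorSqInv l y z < t * bisectorSqInv l (t * y) (t * z) := by
  obtain ⟨hx, hsol⟩ := bisectorSqInv_spec hl hy hz
  set x := bisectorSqInv l y z
  have ht₀ : 0 < t := one_pos.trans ht
  have hs : x / t ^ 2 < x := div_lt_self hx (one_lt_pow₀ ht two_ne_zero)
  rw [← div_lt_iff₀' ht₀, lt_bisectorSqInv_iff hl (by positivity) (by positivity) (by positivity)]
  calc bisectorSq (x / t) (t * y) (t * z)
      = t ^ 2 * (x / t ^ 2) * (bisectorSq (x / t ^ 2) y z / (x / t ^ 2)) := by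
        rw [show x / t = t * (x / t ^ 2) by field_simp, bisectorSq_mul]; field_simp
    _ < t ^ 2 * (x / t ^ 2) * (bisectorSq x y z / x) :=
        mul_lt_mul_of_pos_left (bisectorSq_div_self_lt (by positivity) hs hy.le hz.le)
          (by positivity)
    _ = l ^ 2 := by rw [hsol]; field_simp

end bisectorSqInv

theorem bisectorLength_eq_sqrt_bisectorSq {A B C : EuclideanSpace ℝ (Fin 2)} {x y z : ℝ}
    (hx : 0 < x) (hy : 0 < y) (hz : 0 < z) (hBC : dist B C = y + z) (hCA : dist C A = z + x)
    (hAB : dist A B = x + y) : bisectorLength A B C = √(bisectorSq x y z) := by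
  have hweights : dist C A / (dist C A + dist A B) + dist A B / (dist C A + dist A B) = 1 := by
    rw [hCA, hAB]; field_simp
  rw [bisectorLength, eq_comm,
    Real.sqrt_eq_iff_eq_sq (by unfold bisectorSq; positivity) dist_nonneg,
    dist_smul_add_smul_sq _ _ _ hweights, dist_comm A C, hCA, hAB, hBC, bisectorSq]
  field_simp
  ring

theorem exists_pos_bisectorSq_eq_sq {l₁ l₂ l₃ : ℝ} (h₁ : 0 < l₁) (h₂ : 0 < l₂) (h₃ : 0 < l₃) :
    ∃ x y z : ℝ, 0 < x ∧ 0 < y ∧ 0 < z ∧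
      bisectorSq x y z = l₁ ^ 2 ∧ bisectorSq y z x = l₂ ^ 2 ∧ bisectorSq z x y = l₃ ^ 2 := by
  set l : Fin 3 → ℝ := ![l₁, l₂, l₃]
  have hl : ∀ i, 0 < l i := by intro i; fin_cases i <;> assumption
  obtain ⟨w, hw, hfix⟩ := exists_pos_isFixedPt_of_antitoneOn
    (F := fun w i => bisectorSqInv (l i) (w (i + 1)) (w (i + 2))) (M := l)
    (fun w hw i => (bisectorSqInv_spec (hl i) (hw _) (hw _)).1)
    (fun v hv w hw hvw i => bisectorSqInv_le_bisectorSqInv (hl i) (hv _) (hv _) (hvw _) (hvw _))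
    (fun w hw i => (bisectorSqInv_lt (hl i) (hw _) (hw _)).le)
    (fun w hw t ht i => bisectorSqInv_lt_mul_bisectorSqInv_mul (hl i) (hw _) (hw _) ht)
  have hsol (i : Fin 3) : bisectorSq (w i) (w (i + 1)) (w (i + 2)) = l i ^ 2 := by
    conv_lhs => rw [← congrFun hfix i]
    exact (bisectorSqInv_spec (hl i) (hw _) (hw _)).2
  exact ⟨w 0, w 1, w 2, hw 0, hw 1, hw 2, hsol 0, hsol 1, hsol 2⟩

theorem exists_triangle_with_prescribed_bisectors (l₁ l₂ l₃ : ℝ)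
    (h₁ : 0 < l₁) (h₂ : 0 < l₂) (h₃ : 0 < l₃) :
    ∃ A B C : EuclideanSpace ℝ (Fin 2), ¬ Collinear ℝ ({A, B, C} : Set (EuclideanSpace ℝ (Fin 2))) ∧
      bisectorLength A B C = l₂ ∧ bisectorLength B C A = l₁ ∧ bisectorLength C A B = l₃ := by
  obtain ⟨x, y, z, hx, hy, hz, hA, hB, hC⟩ := exists_pos_bisectorSq_eq_sq h₂ h₁ h₃
  obtain ⟨A, B, C, hBC, hCA, hAB⟩ := exists_dist_eq_of_lt_add (a := y + z) (b := z + x)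
    (c := x + y) (by linarith) (by linarith) (by linarith)
  refine ⟨A, B, C, not_collinear_of_dist_lt_dist_add_dist ?_ ?_ ?_, ?_, ?_, ?_⟩
  · rw [hBC, hCA, hAB]; linarith
  · rw [hBC, hCA, hAB]; linarith
  · rw [hBC, hCA, hAB]; linarith
  · rw [bisectorLength_eq_sqrt_bisectorSq hx hy hz hBC hCA hAB, hA, Real.sqrt_sq h₂.le]
  · rw [bisectorLength_eq_sqrt_bisectorSq hy hz hx hCA hAB hBC, hB, Real.sqrt_sq h₁.le]
  · rw [bisectorLength_eq_sqrt_bisectorSq hz hx hy hAB hBC hCA, hC, Real.sqrt_sq h₃.le]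
end

section
/- For any real numbers l₁, l₂, l₃ with l₁ > 0, l₂ > 0, l₃ > 0, there exist real numbers a, b, c > 0 satisfying the strict triangle inequalities a < b + c, b < c + a, c < a + b, such that √(b·c·((b+c)² − a²))/(b+c) = l₁, √(c·a·((c+a)² − b²))/(c+a) = l₂, and √(a·b·((a+b)² − c²))/(a+b) = l₃. (Side-length form of the existence of a triangle with prescribed bisector lengths.) -/
/-!
Bisector lengths are homogeneous of degree one in the sides, so it suffices to realise the ratios
`l₁ : l₂ : l₃`. In Ravi coordinates `a = y + z`, `b = z + x`, `c = x + y`, normalised by `z = 1`,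
the squared ratios `(t_b / t_c)²` and `(t_a / t_b)²` of the bisectors are explicit rational
functions of `x` and `y`. For fixed `x` the first is strictly increasing in `y`
and crosses any `k > 0` inside a `y`-interval that does not depend on `x`, so it equals `k` along
a continuous curve `y = Y x`. Along that curve the second is small for small `x` and large for
large `x`, and the intermediate value theorem finishes.
-/

open Set Filter Topology

theorem continuousAt_of_strictMonoOn_of_eq {X α β : Type*} [TopologicalSpace X]
    [LinearOrder α] [TopologicalSpace α] [OrderTopology α] [DenselyOrdered α] [NoMinOrder α]
    [NoMaxOrder α] [LinearOrder β] [TopologicalSpace β] [OrderClosedTopology β]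
    {F : X → α → β} {g : X → α} {t : Set α} {c : β} {x₀ : X} (ht : IsOpen t)
    (hcont : ∀ y ∈ t, ContinuousAt (fun x ↦ F x y) x₀)
    (hF : ∀ᶠ x in 𝓝 x₀, StrictMonoOn (F x) t ∧ g x ∈ t ∧ F x (g x) = c) :
    ContinuousAt g x₀ := by
  obtain ⟨hmono₀, hg₀, hc₀⟩ := hF.self_of_nhds
  have ht₀ : t ∈ 𝓝 (g x₀) := ht.mem_nhds hg₀
  refine tendsto_order.2 ⟨fun a ha ↦ ?_, fun b hb ↦ ?_⟩
  · obtain ⟨a', ⟨haa', ha'g⟩, ha't⟩ : ∃ a' ∈ Ioo a (g x₀), a' ∈ t :=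
      nonempty_of_mem (inter_mem (Ioo_mem_nhdsLT ha) (nhdsWithin_le_nhds ht₀))
    have hlt : F x₀ a' < c := hc₀ ▸ hmono₀ ha't hg₀ ha'g
    filter_upwards [hF, (hcont a' ha't).eventually (eventually_lt_nhds hlt)]
      with x ⟨hmono, hgx, hcx⟩ hx
    by_contra! hle
    exact (hcx ▸ hx).not_ge (hmono.monotoneOn hgx ha't (hle.trans haa'.le))
  · obtain ⟨b', ⟨hgb', hb'b⟩, hb't⟩ : ∃ b' ∈ Ioo (g x₀) b, b' ∈ t :=
      nonempty_of_mem (inter_mem (Ioo_mem_nhdsGT hb) (nhdsWithin_le_nhds ht₀))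
    have hlt : c < F x₀ b' := hc₀ ▸ hmono₀ hg₀ hb't hgb'
    filter_upwards [hF, (hcont b' hb't).eventually (eventually_gt_nhds hlt)]
      with x ⟨hmono, hgx, hcx⟩ hx
    by_contra! hle
    exact (hcx ▸ hx).not_ge (hmono.monotoneOn hb't hgx (hb'b.le.trans hle))

noncomputable def bisector (a b c : ℝ) : ℝ := √(b * c * ((b + c) ^ 2 - a ^ 2)) / (b + c)

theorem bisector_smul {t : ℝ} (ht : 0 ≤ t) (a b c : ℝ) :
    bisector (t * a) (t * b) (t * c) = t * bisector a b c := by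
  rcases ht.eq_or_lt with rfl | ht
  · simp [bisector]
  have : t * b * (t * c) * ((t * b + t * c) ^ 2 - (t * a) ^ 2)
      = (t ^ 2) ^ 2 * (b * c * ((b + c) ^ 2 - a ^ 2)) := by ring
  rw [bisector, bisector, this, Real.sqrt_mul (by positivity), Real.sqrt_sq (by positivity),
    ← mul_add]
  field_simp

theorem bisector_add_add (x y z : ℝ) :
    bisector (y + z) (z + x) (x + y) =
      √(4 * (x + y + z) * x * (x + y) * (x + z)) / (2 * x + y + z) := by
  rw [bisector]
  congr 1 <;> ring_nf

theorem bisector_add_add_pos {x y z : ℝ} (hx : 0 < x) (hy : 0 < y) (hz : 0 < z) :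
    0 < bisector (y + z) (z + x) (x + y) := by
  rw [bisector_add_add]
  positivity

theorem exists_smul_bisector_eq {a b c l₁ l₂ l₃ : ℝ} (ha : 0 < bisector a b c)
    (hb : 0 < bisector b c a) (hc : 0 < bisector c a b)
    (hl₁ : 0 < l₁) (hl₂ : 0 < l₂) (hl₃ : 0 < l₃)
    (hab : (bisector a b c / bisector b c a) ^ 2 = (l₁ / l₂) ^ 2)
    (hbc : (bisector b c a / bisector c a b) ^ 2 = (l₂ / l₃) ^ 2) :
    ∃ t > 0, bisector (t * a) (t * b) (t * c) = l₁ ∧ bisector (t * b) (t * c) (t * a) = l₂ ∧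
      bisector (t * c) (t * a) (t * b) = l₃ := by
  rw [sq_eq_sq₀ (by positivity) (by positivity), div_eq_div_iff hb.ne' hl₂.ne'] at hab
  rw [sq_eq_sq₀ (by positivity) (by positivity), div_eq_div_iff hc.ne' hl₃.ne'] at hbc
  have hac : bisector a b c * l₃ = l₁ * bisector c a b :=
    mul_right_cancel₀ hl₂.ne' (by linear_combination l₃ * hab + l₁ * hbc)
  refine ⟨l₁ / bisector a b c, by positivity, ?_⟩
  simp only [bisector_smul (by positivity : 0 ≤ l₁ / bisector a b c)]
  refine ⟨?_, ?_, ?_⟩ <;> field_simp <;> linarith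

noncomputable def ratioBC (x y : ℝ) : ℝ :=
  y * (y + x) / (2 * y + x + 1) ^ 2 * ((x + y + 2) ^ 2 / (x + 1))

noncomputable def ratioAB (x y : ℝ) : ℝ :=
  x * (x + 1) * (2 * y + x + 1) ^ 2 / (y * (y + 1) * (2 * x + y + 1) ^ 2)

theorem ratioAB_eq {x y : ℝ} (hx : 0 < x) (hy : 0 < y) :
    ratioAB x y = (bisector (y + 1) (1 + x) (x + y) / bisector (1 + x) (x + y) (y + 1)) ^ 2 := by
  rw [bisector_add_add, bisector_add_add, div_pow, div_pow, div_pow, Real.sq_sqrt (by positivity),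
    Real.sq_sqrt (by positivity), ratioAB]
  field_simp
  ring

theorem ratioBC_eq {x y : ℝ} (hx : 0 < x) (hy : 0 < y) :
    ratioBC x y = (bisector (1 + x) (x + y) (y + 1) / bisector (x + y) (y + 1) (1 + x)) ^ 2 := by
  rw [bisector_add_add, bisector_add_add, div_pow, div_pow, div_pow, Real.sq_sqrt (by positivity),
    Real.sq_sqrt (by positivity), ratioBC]
  field_simp
  ring

/-- With `P = 2 * u + v + w` the function is `((1 - w / P) ^ 2 - (v / P) ^ 2) / 4`. -/
theorem strictMonoOn_mul_add_div_sq {v w : ℝ} (hv : 0 ≤ v) (hw : 0 < w) :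
    StrictMonoOn (fun u ↦ u * (u + v) / (2 * u + v + w) ^ 2) (Ioi 0) := by
  intro u₁ hu₁ u₂ hu₂ h
  simp only [mem_Ioi] at hu₁ hu₂
  rw [div_lt_div_iff₀ (by positivity) (by positivity)]
  nlinarith [mul_pos (mul_pos (sub_pos.2 h) hw) hu₁,
    mul_pos (mul_pos (sub_pos.2 h) hw) hu₂, mul_nonneg (mul_nonneg (sub_pos.2 h).le hv) hv,
    mul_nonneg (mul_nonneg (sub_pos.2 h).le hv) hw.le]

theorem strictMonoOn_ratioBC {x : ℝ} (hx : 0 < x) : StrictMonoOn (ratioBC x) (Ioi 0) := by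
  intro y₁ hy₁ y₂ hy₂ h
  have hy₁pos : (0 : ℝ) < y₁ := hy₁
  refine mul_lt_mul'' (strictMonoOn_mul_add_div_sq hx.le one_pos hy₁ hy₂ h) ?_
    (by positivity) (by positivity)
  gcongr

theorem ratioBC_le {x y : ℝ} (hx : 0 < x) (hy : 0 < y) (hy₁ : y ≤ 1) : ratioBC x y ≤ 9 * y := by
  rw [ratioBC, div_mul_div_comm, div_le_iff₀ (by positivity)]
  calc y * (y + x) * (x + y + 2) ^ 2 ≤ y * (1 + x) * (3 * (2 * y + x + 1)) ^ 2 := by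
        gcongr; linarith
    _ = 9 * y * ((2 * y + x + 1) ^ 2 * (x + 1)) := by ring

theorem le_ratioBC {x y : ℝ} (hx : 0 < x) (hy₁ : 1 ≤ y) : y / 4 ≤ ratioBC x y := by
  rw [ratioBC, div_mul_div_comm, le_div_iff₀ (by positivity), add_comm x 1]
  calc y / 4 * ((2 * y + x + 1) ^ 2 * (1 + x)) ≤ y / 4 * ((2 * (x + y + 2)) ^ 2 * (y + x)) := by
        gcongr; linarith
    _ = y * (y + x) * (x + y + 2) ^ 2 := by ring

theorem continuousAt_ratioBC {x y : ℝ} (hx : 0 < x) (hy : 0 < y) :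
    ContinuousAt (Function.uncurry ratioBC) (x, y) := by
  unfold ratioBC Function.uncurry
  fun_prop (disch := positivity)

theorem exists_ratioBC_eq {k x : ℝ} (hk : 0 < k) (hx : 0 < x) :
    ∃ y ∈ Icc (min 1 (k / 10)) (max 1 (5 * k)), ratioBC x y = k := by
  have hp : 0 < min 1 (k / 10) := by positivity
  have hlt : ratioBC x (min 1 (k / 10)) < k := calc
    _ ≤ 9 * min 1 (k / 10) := ratioBC_le hx hp (min_le_left _ _)
    _ < k := by linarith [min_le_right 1 (k / 10)]
  have hgt : k < ratioBC x (max 1 (5 * k)) := calc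
    k < max 1 (5 * k) / 4 := by linarith [le_max_right 1 (5 * k)]
    _ ≤ _ := le_ratioBC hx (le_max_left _ _)
  have hcont : ContinuousOn (ratioBC x) (Icc (min 1 (k / 10)) (max 1 (5 * k))) := fun y hy ↦
    ContinuousAt.continuousWithinAt <|
      (continuousAt_ratioBC hx (hp.trans_le hy.1)).comp (f := (x, ·)) (by fun_prop)
  exact intermediate_value_Icc ((min_le_left _ _).trans (le_max_left _ _)) hcont ⟨hlt.le, hgt.le⟩

theorem exists_continuousOn_ratioBC_eq {k : ℝ} (hk : 0 < k) :
    ∃ Y : ℝ → ℝ, ContinuousOn Y (Ioi 0) ∧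
      ∀ x > 0, Y x ∈ Icc (min 1 (k / 10)) (max 1 (5 * k)) ∧ ratioBC x (Y x) = k := by
  choose! Y hY using fun x (hx : 0 < x) ↦ exists_ratioBC_eq hk hx
  have hYpos : ∀ x > 0, 0 < Y x := fun x hx ↦ lt_of_lt_of_le (by positivity) (hY x hx).1.1
  refine ⟨Y, fun x hx ↦ ContinuousAt.continuousWithinAt ?_, hY⟩
  refine continuousAt_of_strictMonoOn_of_eq (F := ratioBC) (c := k) isOpen_Ioi
    (fun y hy ↦ (continuousAt_ratioBC hx hy).comp (f := (·, y)) (by fun_prop)) ?_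
  filter_upwards [isOpen_Ioi.mem_nhds hx] with x' hx'
  exact ⟨strictMonoOn_ratioBC hx', hYpos x' hx', (hY x' hx').2⟩

theorem ratioAB_le {x y p q : ℝ} (hx : 0 < x) (hx₁ : x ≤ 1) (hp : 0 < p) (hpy : p ≤ y)
    (hyq : y ≤ q) : ratioAB x y ≤ 8 * x * (q + 1) ^ 2 / p := by
  have hy : 0 < y := hp.trans_le hpy
  rw [ratioAB, div_le_div_iff₀ (by positivity) hp]
  have : p ≤ y * (y + 1) * (2 * x + y + 1) ^ 2 := by
    calc p ≤ y * 1 * 1 ^ 2 := by simpa using hpy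
      _ ≤ _ := by gcongr <;> linarith
  calc x * (x + 1) * (2 * y + x + 1) ^ 2 * p
      ≤ x * (1 + 1) * (2 * (q + 1)) ^ 2 * (y * (y + 1) * (2 * x + y + 1) ^ 2) := by
        gcongr; linarith
    _ = 8 * x * (q + 1) ^ 2 * (y * (y + 1) * (2 * x + y + 1) ^ 2) := by ring

theorem le_ratioAB {x y q : ℝ} (hx : 0 < x) (hy : 0 < y) (hyq : y ≤ q) :
    x ^ 2 / (9 * q * (q + 1)) ≤ ratioAB x y := by
  have hq : 0 < q := hy.trans_le hyq
  rw [ratioAB, div_le_div_iff₀ (by positivity) (by positivity)]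
  calc x ^ 2 * (y * (y + 1) * (2 * x + y + 1) ^ 2)
      ≤ x * (x + 1) * (q * (q + 1) * (3 * (2 * y + x + 1)) ^ 2) := by
        rw [sq x]; gcongr <;> linarith
    _ = _ := by ring

theorem exists_ratioBC_eq_ratioAB_eq {k H : ℝ} (hk : 0 < k) (hH : 0 < H) :
    ∃ x y, 0 < x ∧ 0 < y ∧ ratioBC x y = k ∧ ratioAB x y = H := by
  obtain ⟨Y, hYc, hY⟩ := exists_continuousOn_ratioBC_eq hk
  set p := min 1 (k / 10)
  set q := max 1 (5 * k)
  have hp : 0 < p := by positivity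
  have hq : 1 ≤ q := le_max_left _ _
  have hYpos : ∀ x > 0, 0 < Y x := fun x hx ↦ hp.trans_le (hY x hx).1.1
  set x₁ := min 1 (p * H / (16 * (q + 1) ^ 2))
  set x₂ := 1 + 9 * q * (q + 1) * H
  have hx₁ : 0 < x₁ := by positivity
  have hx₂ : 1 ≤ x₂ := le_add_of_nonneg_right (by positivity)
  have hlt : ratioAB x₁ (Y x₁) < H := calc
    _ ≤ 8 * x₁ * (q + 1) ^ 2 / p :=
      ratioAB_le hx₁ (min_le_left _ _) hp (hY x₁ hx₁).1.1 (hY x₁ hx₁).1.2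
    _ ≤ H / 2 := by
      rw [div_le_iff₀ hp]
      have := min_le_right 1 (p * H / (16 * (q + 1) ^ 2))
      rw [le_div_iff₀ (by positivity)] at this
      linarith
    _ < H := by linarith
  have hgt : H < ratioAB x₂ (Y x₂) := calc
    H < x₂ ^ 2 / (9 * q * (q + 1)) := by
      rw [lt_div_iff₀ (by positivity)]
      nlinarith
    _ ≤ _ := le_ratioAB (by linarith) (hYpos x₂ (by linarith)) (hY x₂ (by linarith)).1.2
  have hcont : ContinuousOn (fun x ↦ ratioAB x (Y x)) (Icc x₁ x₂) := by
    have hYc' : ContinuousOn Y (Icc x₁ x₂) := hYc.mono fun x hx ↦ hx₁.trans_le hx.1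
    unfold ratioAB
    refine ContinuousOn.div (by fun_prop) (by fun_prop) fun x hx ↦ ?_
    have hx0 := hx₁.trans_le hx.1
    have := hYpos x hx0
    positivity
  obtain ⟨x, hx, hxH⟩ :=
    intermediate_value_Icc ((min_le_left _ _).trans hx₂) hcont ⟨hlt.le, hgt.le⟩
  have hx0 : 0 < x := hx₁.trans_le hx.1
  exact ⟨x, Y x, hx0, hYpos x hx0, (hY x hx0).2, hxH⟩

theorem exists_sides_with_prescribed_bisectors (l₁ l₂ l₃ : ℝ)
    (h₁ : 0 < l₁) (h₂ : 0 < l₂) (h₃ : 0 < l₃) :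
    ∃ a b c : ℝ, 0 < a ∧ 0 < b ∧ 0 < c ∧
      a < b + c ∧ b < c + a ∧ c < a + b ∧
      Real.sqrt (b * c * ((b + c) ^ 2 - a ^ 2)) / (b + c) = l₁ ∧
      Real.sqrt (c * a * ((c + a) ^ 2 - b ^ 2)) / (c + a) = l₂ ∧
      Real.sqrt (a * b * ((a + b) ^ 2 - c ^ 2)) / (a + b) = l₃ := by
  obtain ⟨x, y, hx, hy, hBC, hAB⟩ := exists_ratioBC_eq_ratioAB_eq
    (k := (l₂ / l₃) ^ 2) (H := (l₁ / l₂) ^ 2) (by positivity) (by positivity)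
  obtain ⟨t, ht, hta, htb, htc⟩ := exists_smul_bisector_eq
    (bisector_add_add_pos hx hy one_pos) (bisector_add_add_pos hy one_pos hx)
    (bisector_add_add_pos one_pos hx hy) h₁ h₂ h₃ (ratioAB_eq hx hy ▸ hAB) (ratioBC_eq hx hy ▸ hBC)
  refine ⟨t * (y + 1), t * (1 + x), t * (x + y), by positivity, by positivity, by positivity,
    ?_, ?_, ?_, hta, htb, htc⟩ <;> nlinarith [mul_pos ht hx, mul_pos ht hy]
end

section
/- For any real numbers l₁, l₂ with 0 < l₂ < l₁, there exist noncollinear points A, B, C in EuclideanSpace ℝ (Fin 2) with dist A B = dist C B (an isosceles triangle with apex B) such that t_B = l₁ and t_A = t_C = l₂. -/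
/-!
Take the triangle with vertices `-P`, `B`, `P` where `P ⟂ B`. It is isosceles with apex `B`, so
the bisector from `B` is the altitude, of length `‖B‖`; the reflection fixing `B` and negating `P`
exchanges the two base bisectors, so they have equal length. That length depends continuously
on `P`, vanishes at `P = 0` and is at least `‖P‖`, so the intermediate value theorem makes it equal
to any prescribed positive value.
-/

open EuclideanGeometry Real

local notation "Plane" => EuclideanSpace ℝ (Fin 2)

theorem bisectorLength_comm (A B C : Plane) :
    bisectorLength A C B = bisectorLength A B C := by
  simp only [bisectorLength, dist_comm C A, dist_comm B A, add_comm (dist A B), add_comm (_ • C)]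

theorem bisectorLength_map (φ : Plane →ₗᵢ[ℝ] Plane) (A B C : Plane) :
    bisectorLength (φ A) (φ B) (φ C) = bisectorLength A B C := by
  simp only [bisectorLength, φ.dist_map, ← φ.map_smul, ← φ.map_add]

theorem bisectorLength_eq_dist_midpoint {A B C : Plane} (h : dist A B = dist A C) (hAB : A ≠ B) :
    bisectorLength A B C = dist A (midpoint ℝ B C) := by
  have half : dist A B / (dist A B + dist A B) = ⅟2 := by
    have := dist_ne_zero.2 hAB
    field_simp
    norm_num
  rw [bisectorLength, dist_comm C A, ← h, half, ← smul_add, midpoint_eq_smul_add]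

theorem Continuous.bisectorLength {X : Type*} [TopologicalSpace X] {A B C : X → Plane}
    (hA : Continuous A) (hB : Continuous B) (hC : Continuous C)
    (h : ∀ x, dist (C x) (A x) + dist (A x) (B x) ≠ 0) :
    Continuous fun x => bisectorLength (A x) (B x) (C x) := by
  unfold _root_.bisectorLength
  fun_prop (disch := exact h _)

theorem norm_le_norm_add_of_inner_eq_zero {F : Type*} [NormedAddCommGroup F]
    [InnerProductSpace ℝ F] {x y : F} (h : inner ℝ x y = 0) : ‖y‖ ≤ ‖x + y‖ := by
  have := norm_add_sq_eq_norm_sq_add_norm_sq_real h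
  nlinarith [norm_nonneg x, norm_nonneg y, norm_nonneg (x + y)]

theorem dist_neg_left_of_inner_eq_zero {F : Type*} [NormedAddCommGroup F]
    [InnerProductSpace ℝ F] {x y : F} (h : inner ℝ x y = 0) : dist (-x) y = dist x y := by
  rw [dist_eq_norm, dist_eq_norm, show -x - y = -(x + y) by abel, norm_neg,
    norm_add_eq_sqrt_iff_real_inner_eq_zero.2 h, norm_sub_eq_sqrt_iff_real_inner_eq_zero.2 h]

section OrthogonalTriangle

variable {P B : Plane}

theorem not_collinear_neg_of_inner_eq_zero (h : inner ℝ P B = 0) (hP : P ≠ 0) (hB : B ≠ 0) :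
    ¬ Collinear ℝ ({-P, B, P} : Set Plane) := by
  intro hcol
  have hPP : -P ≠ P := by simpa [neg_eq_iff_add_eq_zero, ← two_smul ℝ] using hP
  have hline : B ∈ line[ℝ, -P, P] :=
    hcol.mem_affineSpan_of_mem_of_ne (by simp) (by simp) (by simp) hPP
  obtain ⟨r, hr⟩ := mem_affineSpan_pair_iff_exists_lineMap_eq.1 hline
  rw [AffineMap.lineMap_apply_module] at hr
  have hBP : B = (2 * r - 1) • P := by rw [← hr]; module
  have : inner ℝ B B = 0 := by
    nth_rw 2 [hBP]
    rw [inner_smul_right, real_inner_comm, h, mul_zero]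
  exact hB (inner_self_eq_zero.1 this)

theorem bisectorLength_self_neg (h : inner ℝ P B = 0) :
    bisectorLength P (-P) B = bisectorLength (-P) B P := by
  set φ := (ℝ ∙ P)ᗮ.reflection
  have hφP : φ P = -P := Submodule.reflection_orthogonalComplement_singleton_eq_neg P
  have hφB : φ B = B := Submodule.reflection_mem_subspace_eq_self
    (Submodule.mem_orthogonal_singleton_iff_inner_right.2 h)
  rw [← bisectorLength_comm, ← bisectorLength_map φ.toLinearIsometry]
  simp [hφP, hφB]

theorem bisectorLength_apex (h : inner ℝ P B = 0) (hB : B ≠ 0) :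
    bisectorLength B P (-P) = ‖B‖ := by
  have hBP : B ≠ P := by
    rintro rfl
    exact hB (inner_self_eq_zero.1 h)
  rw [bisectorLength_eq_dist_midpoint _ hBP, midpoint_self_neg, dist_zero_right]
  rw [dist_comm B, dist_comm B, dist_neg_left_of_inner_eq_zero h]

theorem norm_le_bisectorLength (h : inner ℝ P B = 0) : ‖P‖ ≤ bisectorLength (-P) B P := by
  set s := dist P (-P) / (dist P (-P) + dist (-P) B)
  set t := dist (-P) B / (dist P (-P) + dist (-P) B)
  have ht : 0 ≤ t := by positivity
  have hperp : inner ℝ (s • B) ((1 + t) • P) = 0 := by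
    rw [inner_smul_left, inner_smul_right, real_inner_comm, h]; simp
  calc ‖P‖ ≤ (1 + t) * ‖P‖ := le_mul_of_one_le_left (norm_nonneg P) (by linarith)
    _ = ‖(1 + t) • P‖ := by rw [norm_smul, Real.norm_of_nonneg (by linarith)]
    _ ≤ ‖s • B + (1 + t) • P‖ := norm_le_norm_add_of_inner_eq_zero hperp
    _ = bisectorLength (-P) B P := by
      rw [bisectorLength, dist_comm, dist_eq_norm]
      congr 1
      module

end OrthogonalTriangle

theorem exists_isosceles_with_prescribed_bisectors (l₁ l₂ : ℝ)
    (h₂ : 0 < l₂) (h₁₂ : l₂ < l₁) :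
    ∃ A B C : EuclideanSpace ℝ (Fin 2), ¬ Collinear ℝ ({A, B, C} : Set (EuclideanSpace ℝ (Fin 2))) ∧
      dist A B = dist C B ∧
      bisectorLength B C A = l₁ ∧ bisectorLength A B C = l₂ ∧ bisectorLength C A B = l₂ := by
  have hl₁ : 0 < l₁ := h₂.trans h₁₂
  set u : Plane := EuclideanSpace.single 0 1
  set B : Plane := EuclideanSpace.single 1 l₁
  have hB : B ≠ 0 := by simp [B, hl₁.ne']
  have hperp (x : ℝ) : inner ℝ (x • u) B = 0 := by
    simp [u, B, inner_smul_left, EuclideanSpace.inner_single_left]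
  have hnorm (x : ℝ) : ‖x • u‖ = |x| := by simp [u, norm_smul]
  set f := fun x : ℝ => bisectorLength (-(x • u)) B (x • u)
  have hf : Continuous f := by
    refine Continuous.bisectorLength (by fun_prop) continuous_const (by fun_prop) fun x => ?_
    have hne : -(x • u) ≠ B := fun h => by
      simpa [u, B, hl₁.ne] using congrArg (· 1) h
    exact (add_pos_of_nonneg_of_pos dist_nonneg (dist_pos.2 hne)).ne'
  have hf0 : f 0 = 0 := by simp [f, bisectorLength]
  obtain ⟨x, -, hfx⟩ : ∃ x ∈ Set.Icc 0 l₂, f x = l₂ :=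
    intermediate_value_Icc h₂.le hf.continuousOn
      ⟨by rw [hf0]; exact h₂.le, by
        simpa [hnorm, abs_of_pos h₂] using norm_le_bisectorLength (hperp l₂)⟩
  have hx0 : x ≠ 0 := by rintro rfl; exact h₂.ne (hf0.symm.trans hfx)
  refine ⟨-(x • u), B, x • u, not_collinear_neg_of_inner_eq_zero (hperp x) (by simp [u, hx0]) hB,
    dist_neg_left_of_inner_eq_zero (hperp x), ?_, hfx, ?_⟩
  · rw [bisectorLength_apex (hperp x) hB]; simp [B, hl₁.le]
  · rw [bisectorLength_self_neg (hperp x)]; exact hfx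
end

section
/- Let A, B, C be noncollinear points in EuclideanSpace ℝ (Fin 2) whose angles satisfy ∠ A B C < ∠ B A C < ∠ B C A, and suppose the bisector lengths satisfy t_A = l₂ and t_B = l₁. Then, writing a := dist B C, b := dist C A, c := dist A B, the following chain of inequalities holds: l₂/2 < b < a < c < l₁ + l₂. -/
/-!
Write `a, b, c` for the sides opposite `A, B, C`. Larger angles face longer sides, so `b < a < c`.
The foot `D_A` of the bisector from `A` has `CD_A = ab/(b+c) < b`, hence `t_A ≤ b + CD_A < 2b`.
As the largest angle, `C > π/3`, which by the law of cosines means `a² + b² < ab + c²`; this is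
exactly the condition for `BD_A + AD_B = ca/(b+c) + cb/(c+a) < c`, and then
`2c ≤ (t_A + BD_A) + (t_B + AD_B) < t_A + t_B + c`.
-/

open EuclideanGeometry Real

theorem dist_sq_add_dist_sq_lt_of_pi_div_three_lt_angle {V P : Type*} [NormedAddCommGroup V]
    [InnerProductSpace ℝ V] [MetricSpace P] [NormedAddTorsor V P] {A B C : P} (hBC : B ≠ C)
    (hCA : C ≠ A) (h : π / 3 < ∠ B C A) :
    dist B C ^ 2 + dist C A ^ 2 < dist B C * dist C A + dist A B ^ 2 := by
  have hcos : cos (∠ B C A) < 1 / 2 := by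
    rw [← cos_pi_div_three]
    exact cos_lt_cos_of_nonneg_of_le_pi (by positivity) (angle_le_pi _ _ _) h
  have hab : 0 < dist B C * dist C A := mul_pos (dist_pos.2 hBC) (dist_pos.2 hCA)
  have hlaw := law_cos B C A
  rw [dist_comm B A, dist_comm A C] at hlaw
  nlinarith

section BisectorFoot

variable {V : Type*} [NormedAddCommGroup V] [NormedSpace ℝ V]

noncomputable def bisectorFoot (A B C : V) : V :=
  (dist C A / (dist C A + dist A B)) • B + (dist A B / (dist C A + dist A B)) • C

theorem bisectorFoot_eq_lineMap {A B C : V} (h : dist C A + dist A B ≠ 0) :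
    bisectorFoot A B C = AffineMap.lineMap B C (dist A B / (dist C A + dist A B)) := by
  rw [AffineMap.lineMap_apply_module, bisectorFoot]
  congr 2
  field_simp
  ring

theorem dist_bisectorFoot_left {A B C : V} (h : dist C A + dist A B ≠ 0) :
    dist (bisectorFoot A B C) B = dist A B / (dist C A + dist A B) * dist B C := by
  rw [bisectorFoot_eq_lineMap h, dist_lineMap_left, Real.norm_of_nonneg (by positivity)]

theorem dist_bisectorFoot_right {A B C : V} (h : dist C A + dist A B ≠ 0) :
    dist (bisectorFoot A B C) C = dist C A / (dist C A + dist A B) * dist B C := by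
  rw [bisectorFoot_eq_lineMap h, dist_lineMap_right, one_sub_div h, add_sub_cancel_right,
    Real.norm_of_nonneg (by positivity)]

end BisectorFoot

section BisectorLength

variable {A B C : EuclideanSpace ℝ (Fin 2)}

theorem bisectorLength_eq_dist_bisectorFoot : bisectorLength A B C = dist A (bisectorFoot A B C) :=
  rfl

theorem bisectorLength_lt_two_mul_dist (h : dist B C < dist C A + dist A B) :
    bisectorLength A B C < 2 * dist C A := by
  rcases eq_or_ne C A with rfl | hCA
  · simp [dist_comm] at h
  have hb : 0 < dist C A := dist_pos.2 hCA
  have hbc : 0 < dist C A + dist A B := by positivity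
  have hDC : dist C A / (dist C A + dist A B) * dist B C < dist C A := by
    rw [div_mul_eq_mul_div, div_lt_iff₀ hbc]
    nlinarith
  calc bisectorLength A B C ≤ dist A C + dist (bisectorFoot A B C) C := dist_triangle_right _ _ _
    _ < 2 * dist C A := by rw [dist_bisectorFoot_right hbc.ne', dist_comm A C]; linarith

theorem dist_lt_bisectorLength_add_bisectorLength
    (h : dist B C ^ 2 + dist C A ^ 2 < dist B C * dist C A + dist A B ^ 2) :
    dist A B < bisectorLength A B C + bisectorLength B C A := by
  have hc : 0 < dist A B := by
    refine dist_pos.2 fun hAB ↦ ?_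
    rw [hAB, dist_self] at h
    nlinarith [sq_nonneg (dist B C - dist C A), mul_nonneg (dist_nonneg (x := B) (y := C))
      (dist_nonneg (x := C) (y := A))]
  have hbc : 0 < dist C A + dist A B := by positivity
  have hca : 0 < dist A B + dist B C := by positivity
  have hA := dist_triangle A (bisectorFoot A B C) B
  have hB := dist_triangle B (bisectorFoot B C A) A
  rw [dist_bisectorFoot_left hbc.ne'] at hA
  rw [dist_bisectorFoot_right hca.ne', dist_comm B A] at hB
  have hfeet : dist A B / (dist C A + dist A B) * dist B C
      + dist A B / (dist A B + dist B C) * dist C A < dist A B := by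
    rw [div_mul_eq_mul_div, div_mul_eq_mul_div, div_add_div _ _ hbc.ne' hca.ne',
      div_lt_iff₀ (by positivity)]
    nlinarith
  rw [bisectorLength_eq_dist_bisectorFoot, bisectorLength_eq_dist_bisectorFoot]
  linarith

end BisectorLength

theorem side_inequalities_of_angle_ordering (l₁ l₂ : ℝ) (A B C : EuclideanSpace ℝ (Fin 2))
    (h : ¬ Collinear ℝ ({A, B, C} : Set (EuclideanSpace ℝ (Fin 2))))
    (hBA : ∠ A B C < ∠ B A C) (hAC : ∠ B A C < ∠ B C A)
    (htA : bisectorLength A B C = l₂) (htB : bisectorLength B C A = l₁) :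
    l₂ / 2 < dist C A ∧ dist C A < dist B C ∧ dist B C < dist A B ∧
      dist A B < l₁ + l₂ := by
  have hCAB : ¬ Collinear ℝ ({C, A, B} : Set (EuclideanSpace ℝ (Fin 2))) := by
    rwa [show ({C, A, B} : Set (EuclideanSpace ℝ (Fin 2))) = {A, B, C} by grind]
  have hBCA : ¬ Collinear ℝ ({B, C, A} : Set (EuclideanSpace ℝ (Fin 2))) := by
    rwa [show ({B, C, A} : Set (EuclideanSpace ℝ (Fin 2))) = {A, B, C} by grind]
  have hba : dist C A < dist B C := by
    rw [dist_comm B C]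
    exact dist_lt_of_angle_lt hCAB (by rwa [angle_comm C B A, angle_comm C A B])
  have hac : dist B C < dist A B := by
    rw [dist_comm A B]
    exact dist_lt_of_angle_lt hBCA hAC
  have htri : dist B C < dist C A + dist A B := by
    rw [add_comm, dist_comm C A, dist_comm A B]
    exact dist_lt_dist_add_dist_iff.2 fun hw ↦ h (by simpa [Set.insert_comm] using hw.collinear)
  have hC : π / 3 < ∠ B C A := pi_div_three_lt_angle_of_le_of_le_of_ne (p₁ := B) (p₂ := C) (p₃ := A)
    (by rw [angle_comm C A B]; exact hAC.le) (by linarith)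
    (.inl (by rw [angle_comm C A B]; exact hAC.ne'))
  refine ⟨?_, hba, hac, ?_⟩
  · linarith [htA ▸ bisectorLength_lt_two_mul_dist htri]
  · rw [← htA, ← htB, add_comm]
    exact dist_lt_bisectorLength_add_bisectorLength <|
      dist_sq_add_dist_sq_lt_of_pi_div_three_lt_angle (ne₂₃_of_not_collinear h)
        (ne₁₃_of_not_collinear h).symm hC
end

section
/- For any noncollinear points A, B, C in EuclideanSpace ℝ (Fin 2), the side AB is shorter than the sum of the bisector lengths from its two endpoints: dist A B < t_A + t_B. -/
open EuclideanGeometry Real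

/-!
The point `I = (a A + b B + c C) / (a + b + c)` with `a = BC`, `b = CA`, `c = AB` (the incenter)
lies on the bisector from `A` strictly between `A` and its foot `D_A`, namely at
`I = A + (b + c) / (a + b + c) • (D_A - A)`; so `AI < t_A`, and likewise `BI < t_B`.
The triangle inequality `AB ≤ AI + IB` then concludes.
-/

open AffineMap

section WeightedPoints

variable {V : Type*} [NormedAddCommGroup V] [NormedSpace ℝ V]

theorem div_smul_add_div_smul_eq_lineMap {b c : ℝ} (hbc : b + c ≠ 0) (B C : V) :
    (b / (b + c)) • B + (c / (b + c)) • C = lineMap B C (c / (b + c)) := by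
  rw [lineMap_apply_module]
  match_scalars <;> field_simp
  ring

theorem inv_smul_add_smul_eq_lineMap {a b c : ℝ} (hbc : b + c ≠ 0) (habc : a + b + c ≠ 0)
    (A B C : V) :
    (a + b + c)⁻¹ • (a • A + b • B + c • C) =
      lineMap A ((b / (b + c)) • B + (c / (b + c)) • C) ((b + c) / (a + b + c)) := by
  rw [lineMap_apply_module]
  match_scalars <;> field_simp
  ring

theorem dist_inv_smul_add_smul_lt {a b c : ℝ} (ha : 0 < a) (hbc : 0 < b + c) {A B C : V}
    (hA : A ≠ (b / (b + c)) • B + (c / (b + c)) • C) :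
    dist A ((a + b + c)⁻¹ • (a • A + b • B + c • C)) <
      dist A ((b / (b + c)) • B + (c / (b + c)) • C) := by
  have habc : 0 < a + b + c := by linarith
  have ht : (b + c) / (a + b + c) < 1 := by rw [div_lt_one habc]; linarith
  rw [inv_smul_add_smul_eq_lineMap hbc.ne' habc.ne', dist_comm, dist_lineMap_left,
    Real.norm_of_nonneg (div_pos hbc habc).le]
  exact mul_lt_of_lt_one_left (dist_pos.2 hA) ht

end WeightedPoints

theorem not_collinear_rotate {k V P : Type*} [DivisionRing k] [AddCommGroup V] [Module k V]
    [AddTorsor V P] {p₁ p₂ p₃ : P} (h : ¬ Collinear k ({p₁, p₂, p₃} : Set P)) :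
    ¬ Collinear k ({p₂, p₃, p₁} : Set P) := by
  rwa [Set.pair_comm, Set.insert_comm]

section Triangle

variable {A B C : EuclideanSpace ℝ (Fin 2)}

noncomputable def triangleIncenter (A B C : EuclideanSpace ℝ (Fin 2)) :
    EuclideanSpace ℝ (Fin 2) :=
  (dist B C + dist C A + dist A B)⁻¹ • (dist B C • A + dist C A • B + dist A B • C)

theorem triangleIncenter_rotate (A B C : EuclideanSpace ℝ (Fin 2)) :
    triangleIncenter B C A = triangleIncenter A B C := by
  unfold triangleIncenter
  congr 1
  · ring
  · abel

theorem dist_triangleIncenter_lt_bisectorLength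
    (h : ¬ Collinear ℝ ({A, B, C} : Set (EuclideanSpace ℝ (Fin 2)))) :
    dist A (triangleIncenter A B C) < bisectorLength A B C := by
  have hBC := dist_pos.2 (ne₂₃_of_not_collinear h)
  have hbc : 0 < dist C A + dist A B :=
    add_pos (dist_pos.2 (ne₁₃_of_not_collinear h).symm) (dist_pos.2 (ne₁₂_of_not_collinear h))
  refine dist_inv_smul_add_smul_lt hBC hbc fun hA => h ?_
  apply collinear_insert_of_mem_affineSpan_pair
  rw [hA, div_smul_add_div_smul_eq_lineMap hbc.ne']
  exact lineMap_mem_affineSpan_pair _ _ _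

end Triangle

theorem side_lt_sum_of_bisectors (A B C : EuclideanSpace ℝ (Fin 2))
    (h : ¬ Collinear ℝ ({A, B, C} : Set (EuclideanSpace ℝ (Fin 2)))) :
    dist A B < bisectorLength A B C + bisectorLength B C A := by
  have hA := dist_triangleIncenter_lt_bisectorLength h
  have hB := dist_triangleIncenter_lt_bisectorLength (not_collinear_rotate h)
  rw [triangleIncenter_rotate] at hB
  calc dist A B ≤ dist A (triangleIncenter A B C) + dist B (triangleIncenter A B C) :=
        dist_triangle_right _ _ _
    _ < bisectorLength A B C + bisectorLength B C A := add_lt_add hA hB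
end

section
/- Let l₁, l₂ > 0 and let (Aₙ, Bₙ, Cₙ) be a sequence of noncollinear triples in EuclideanSpace ℝ (Fin 2) such that for every n the angles satisfy ∠ Aₙ Bₙ Cₙ < ∠ Bₙ Aₙ Cₙ < ∠ Bₙ Cₙ Aₙ, the bisector length from Aₙ equals l₂, and the bisector length from Bₙ equals l₁. If ∠ Aₙ Bₙ Cₙ → 0 as n → ∞, then ∠ Bₙ Aₙ Cₙ → 0 and ∠ Bₙ Cₙ Aₙ → π. -/
open EuclideanGeometry Real

/-!
Write `α, β, γ` for the angles at `A, B, C`, `a, b, c` for the opposite sides and `t_A, t_B`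
for the bisector lengths. Expanding `‖A - D_A‖²` gives `t_A² = 2 b² c² (1 + cos α) / (b + c)²`,
so `t_A ≤ 2 b`; and `a ≤ √2 t_B`, since `a ≤ c` (as `α < γ`) and `cos β ≥ 0`. The law of sines
and Jordan's inequality then give `(2 / π) α b ≤ b sin α = a sin β ≤ a β`, hence
`α t_A ≤ 2 π t_B β`. With `t_A = l₂` and `t_B = l₁` fixed, `β → 0` forces `α → 0`, and
`γ = π - α - β → π`.
-/

open RealInnerProductSpace

theorem bisectorLength_sq {A B C : EuclideanSpace ℝ (Fin 2)} (hAB : A ≠ B) :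
    bisectorLength A B C ^ 2 =
      2 * (dist C A * dist A B) ^ 2 * (1 + cos (∠ B A C)) / (dist C A + dist A B) ^ 2 := by
  set b := dist C A
  set c := dist A B
  have hbc : 0 < b + c := by positivity [dist_pos.2 hAB]
  have hsplit : A - ((b / (b + c)) • B + (c / (b + c)) • C) =
      (b / (b + c)) • (A - B) + (c / (b + c)) • (A - C) := by
    rw [smul_sub, smul_sub, sub_add_sub_comm, ← add_smul, ← add_div,
      div_self hbc.ne', one_smul]
  have hinner : ⟪A - B, A - C⟫ = c * b * cos (∠ B A C) := by
    rw [← neg_sub B A, ← neg_sub C A, inner_neg_neg, ←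
      InnerProductGeometry.cos_angle_mul_norm_mul_norm, ← dist_eq_norm, ← dist_eq_norm,
      dist_comm B A]
    exact mul_comm _ _
  rw [bisectorLength, dist_eq_norm, hsplit, norm_add_sq_real, real_inner_smul_left,
    real_inner_smul_right, hinner, norm_smul, norm_smul, ← dist_eq_norm, ← dist_eq_norm,
    dist_comm A C, Real.norm_of_nonneg (by positivity), Real.norm_of_nonneg (by positivity)]
  field_simp
  ring

theorem bisectorLength_le_two_mul_dist {A B C : EuclideanSpace ℝ (Fin 2)} (hAB : A ≠ B) :
    bisectorLength A B C ≤ 2 * dist C A := by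
  have hc : 0 < dist A B := dist_pos.2 hAB
  refine (pow_le_pow_iff_left₀ (a := bisectorLength A B C) dist_nonneg (by positivity)
    two_ne_zero).1 ?_
  rw [bisectorLength_sq hAB, div_le_iff₀ (by positivity)]
  have hcos : 1 + cos (∠ B A C) ≤ 2 := by linarith [cos_le_one (∠ B A C)]
  have hc2 : dist A B ^ 2 ≤ (dist C A + dist A B) ^ 2 := by
    nlinarith [dist_nonneg (x := C) (y := A)]
  nlinarith [mul_le_mul_of_nonneg_left hcos (sq_nonneg (dist C A * dist A B)),
    mul_le_mul_of_nonneg_left hc2 (sq_nonneg (dist C A))]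

theorem dist_sq_le_two_mul_bisectorLength_sq {A B C : EuclideanSpace ℝ (Fin 2)}
    (hle : dist A B ≤ dist C A) (hα : ∠ B A C ≤ π / 2) :
    dist A B ^ 2 ≤ 2 * bisectorLength A B C ^ 2 := by
  rcases eq_or_ne A B with rfl | hAB
  · rw [dist_self, zero_pow two_ne_zero]; positivity
  have hc : 0 < dist A B := dist_pos.2 hAB
  rw [bisectorLength_sq hAB]
  have hcos : 0 ≤ cos (∠ B A C) :=
    cos_nonneg_of_neg_pi_div_two_le_of_le (by linarith [angle_nonneg B A C, pi_pos]) hα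
  rw [mul_div_assoc', le_div_iff₀ (by positivity)]
  have hsum : (dist C A + dist A B) ^ 2 ≤ 4 * dist C A ^ 2 := by nlinarith
  nlinarith [mul_le_mul_of_nonneg_left hcos (sq_nonneg (dist C A * dist A B)),
    mul_le_mul_of_nonneg_left hsum (sq_nonneg (dist A B))]

theorem angle_mul_bisectorLength_le {A B C : EuclideanSpace ℝ (Fin 2)}
    (hnc : ¬ Collinear ℝ ({A, B, C} : Set (EuclideanSpace ℝ (Fin 2))))
    (hBA : ∠ A B C < ∠ B A C) (hAC : ∠ B A C < ∠ B C A) :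
    ∠ B A C * bisectorLength A B C ≤ 2 * π * bisectorLength B C A * ∠ A B C := by
  have hAB : A ≠ B := ne₁₂_of_not_collinear hnc
  have hsum : ∠ A B C + ∠ B C A + ∠ B A C = π := by
    rw [angle_comm B A C]; exact angle_add_angle_add_angle_eq_pi C hAB.symm
  have hα : ∠ B A C ≤ π / 2 := by linarith [angle_nonneg A B C]
  have hBC : dist B C ≤ dist A B := by
    rw [dist_comm A B]
    refine (dist_lt_of_angle_lt ?_ hAC).le
    rwa [show ({B, C, A} : Set (EuclideanSpace ℝ (Fin 2))) = {A, B, C} by grind]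
  have ha : dist B C ≤ 2 * bisectorLength B C A := by
    have h := dist_sq_le_two_mul_bisectorLength_sq (A := B) (B := C) (C := A) hBC
      (by rw [angle_comm]; linarith)
    have ht : 0 ≤ bisectorLength B C A := dist_nonneg
    exact (pow_le_pow_iff_left₀ dist_nonneg (by positivity) two_ne_zero).1 (by nlinarith)
  have hb : bisectorLength A B C ≤ 2 * dist C A := bisectorLength_le_two_mul_dist hAB
  have hsine : sin (∠ A B C) * dist B C = sin (∠ B A C) * dist C A := by
    rw [law_sin, angle_comm C A B]
  calc ∠ B A C * bisectorLength A B C ≤ ∠ B A C * (2 * dist C A) :=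
        mul_le_mul_of_nonneg_left hb (angle_nonneg _ _ _)
    _ = π * (2 / π * ∠ B A C * dist C A) := by field_simp
    _ ≤ π * (sin (∠ B A C) * dist C A) := by
        gcongr; exact mul_le_sin (angle_nonneg _ _ _) hα
    _ = π * (sin (∠ A B C) * dist B C) := by rw [hsine]
    _ ≤ π * (∠ A B C * (2 * bisectorLength B C A)) := by
        gcongr π * ?_
        exact mul_le_mul (sin_le (angle_nonneg _ _ _)) ha dist_nonneg (angle_nonneg _ _ _)
    _ = 2 * π * bisectorLength B C A * ∠ A B C := by ring

theorem angles_tendsto_of_angleB_tendsto_zero_general (l₁ l₂ : ℝ) (h₂ : 0 < l₂)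
    (A B C : ℕ → EuclideanSpace ℝ (Fin 2))
    (hnc : ∀ n, ¬ Collinear ℝ ({A n, B n, C n} : Set (EuclideanSpace ℝ (Fin 2))))
    (hBA : ∀ n, ∠ (A n) (B n) (C n) < ∠ (B n) (A n) (C n))
    (hAC : ∀ n, ∠ (B n) (A n) (C n) < ∠ (B n) (C n) (A n))
    (htA : ∀ n, bisectorLength (A n) (B n) (C n) = l₂)
    (htB : ∀ n, bisectorLength (B n) (C n) (A n) = l₁)
    (hlim : Filter.Tendsto (fun n => ∠ (A n) (B n) (C n)) Filter.atTop (nhds 0)) :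
    Filter.Tendsto (fun n => ∠ (B n) (A n) (C n)) Filter.atTop (nhds 0) ∧
      Filter.Tendsto (fun n => ∠ (B n) (C n) (A n)) Filter.atTop (nhds π) := by
  have hbound : ∀ n, ∠ (B n) (A n) (C n) ≤ 2 * π * l₁ / l₂ * ∠ (A n) (B n) (C n) := by
    intro n
    have h := angle_mul_bisectorLength_le (hnc n) (hBA n) (hAC n)
    rw [htA, htB] at h
    rw [div_mul_eq_mul_div, le_div_iff₀ h₂]
    linarith
  have hα : Filter.Tendsto (fun n => ∠ (B n) (A n) (C n)) Filter.atTop (nhds 0) :=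
    squeeze_zero (fun n => angle_nonneg _ _ _) hbound
      (by simpa using hlim.const_mul (2 * π * l₁ / l₂))
  refine ⟨hα, ?_⟩
  have hsum :
      ∀ n, π - ∠ (B n) (A n) (C n) - ∠ (A n) (B n) (C n) = ∠ (B n) (C n) (A n) := by
    intro n
    have h := angle_add_angle_add_angle_eq_pi (C n) (ne₁₂_of_not_collinear (hnc n)).symm
    rw [angle_comm (C n) (A n) (B n)] at h
    linarith
  simpa [hsum] using (tendsto_const_nhds (x := π)).sub hα |>.sub hlim

theorem angles_tendsto_of_angleB_tendsto_zero (l₁ l₂ : ℝ) (h₁ : 0 < l₁) (h₂ : 0 < l₂)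
    (A B C : ℕ → EuclideanSpace ℝ (Fin 2))
    (hnc : ∀ n, ¬ Collinear ℝ ({A n, B n, C n} : Set (EuclideanSpace ℝ (Fin 2))))
    (hBA : ∀ n, ∠ (A n) (B n) (C n) < ∠ (B n) (A n) (C n))
    (hAC : ∀ n, ∠ (B n) (A n) (C n) < ∠ (B n) (C n) (A n))
    (htA : ∀ n, bisectorLength (A n) (B n) (C n) = l₂)
    (htB : ∀ n, bisectorLength (B n) (C n) (A n) = l₁)
    (hlim : Filter.Tendsto (fun n => ∠ (A n) (B n) (C n)) Filter.atTop (nhds 0)) :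
    Filter.Tendsto (fun n => ∠ (B n) (A n) (C n)) Filter.atTop (nhds 0) ∧
      Filter.Tendsto (fun n => ∠ (B n) (C n) (A n)) Filter.atTop (nhds π) :=
  angles_tendsto_of_angleB_tendsto_zero_general l₁ l₂ h₂ A B C hnc hBA hAC htA htB hlim
end

section
/- For any real numbers l₁, l₂, l₃ with 0 < l₃ < l₂ < l₁, there exist noncollinear points A, B, C in EuclideanSpace ℝ (Fin 2) such that the bisector lengths satisfy t_A = l₂, t_B = l₁, t_C = l₃, and moreover the angles satisfy ∠ A B C < ∠ B A C < ∠ B C A. -/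
/-!
A triangle with angles `α, β, γ` inscribed in a circle of diameter `s` has sides `s sin α`,
`s sin β`, `s sin γ`, and its bisector from the vertex of angle `α` has length
`s sin β sin γ / cos ((β - γ) / 2)`. After scaling, it therefore suffices to find angles
`b = ∠B < ∠A < c = ∠C` with `t_A / t_B = l₂ / l₁` and `t_C / t_B = l₃ / l₁`.

For fixed `b`, the ratio `t_A / t_B` is strictly increasing in `c` and equals `1` when `∠A = ∠B`.
So as long as it is at most `l₂ / l₁` on the isosceles triangle `∠A = ∠C`, the equation
`t_A / t_B = l₂ / l₁` has a root `c = Γ b` with `∠B ≤ ∠A ≤ ∠C`, and monotonicity makes `Γ`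
continuous. Along this curve, `t_C / t_B` is below `l₃ / l₁` for small `b`, and it equals
`t_A / t_B = l₂ / l₁` at the first `b` where the isosceles triangle `∠A = ∠C` is reached.
The intermediate value theorem then gives the triangle.
-/

open EuclideanGeometry Real

open Set Filter Topology RealInnerProductSpace

theorem ContinuousOn.exists_mem_Ioc_eq_and_forall_lt {α δ : Type*}
    [ConditionallyCompleteLinearOrder α] [TopologicalSpace α] [OrderTopology α]
    [DenselyOrdered α] [LinearOrder δ] [TopologicalSpace δ] [OrderClosedTopology δ]
    {f : α → δ} {a b : α} {y : δ} (hab : a ≤ b) (hf : ContinuousOn f (Icc a b))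
    (ha : f a < y) (hb : y ≤ f b) :
    ∃ c ∈ Ioc a b, f c = y ∧ ∀ x ∈ Ico a c, f x < y := by
  set T := Icc a b ∩ f ⁻¹' Ici y
  have hT : IsClosed T := hf.preimage_isClosed_of_isClosed isClosed_Icc isClosed_Ici
  have hTb : BddBelow T := bddBelow_Icc.mono inter_subset_left
  obtain ⟨⟨hac, hcb⟩, hyc⟩ : sInf T ∈ T := hT.csInf_mem ⟨b, ⟨hab, le_rfl⟩, hb⟩ hTb
  have below : ∀ x ∈ Ico a (sInf T), f x < y := fun x hx =>
    not_le.1 fun hyx => (csInf_le hTb ⟨⟨hx.1, hx.2.le.trans hcb⟩, hyx⟩).not_gt hx.2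
  obtain ⟨x, hx, hfx⟩ := intermediate_value_Icc hac (hf.mono (Icc_subset_Icc_right hcb))
    ⟨ha.le, hyc⟩
  have hxc : x = sInf T := hx.2.eq_or_lt.resolve_right fun hlt => (below x ⟨hx.1, hlt⟩).ne hfx
  rw [hxc] at hx hfx
  exact ⟨sInf T, ⟨hac.lt_of_ne fun h => ha.ne (h ▸ hfx), hcb⟩, hfx, below⟩

section ImplicitRoot

variable {X α β : Type*} [TopologicalSpace X] [LinearOrder α] [TopologicalSpace α]
  [OrderTopology α] [DenselyOrdered α] [LinearOrder β] [TopologicalSpace β]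
  [OrderClosedTopology β] {f : X → α → β} {g : X → α} {s : Set X} {U : Set (X × α)} {p : β}

theorem eventually_lt_of_apply_eq_of_strictMonoOn (hU : IsOpen U)
    (hf : ContinuousOn (Function.uncurry f) U)
    (hmono : ∀ x ∈ s, StrictMonoOn (f x) {y | (x, y) ∈ U})
    (hgU : ∀ x ∈ s, (x, g x) ∈ U) (hg : ∀ x ∈ s, f x (g x) = p) {x₀ : X} (hx₀ : x₀ ∈ s)
    {a : α} (ha : a < g x₀) : ∀ᶠ x in 𝓝[s] x₀, a < g x := by
  obtain ⟨u, hu, v, hv, huv⟩ := mem_nhds_prod_iff.1 (hU.mem_nhds (hgU x₀ hx₀))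
  obtain ⟨l, hl, hlv⟩ := exists_Ioc_subset_of_mem_nhds' hv ha
  obtain ⟨c, hlc, hcg⟩ := exists_between hl.2
  have hcv : c ∈ v := hlv ⟨hlc, hcg.le⟩
  have hcU : (x₀, c) ∈ U := huv ⟨mem_of_mem_nhds hu, hcv⟩
  have hfc : f x₀ c < p := hg x₀ hx₀ ▸ hmono x₀ hx₀ hcU (hgU x₀ hx₀) hcg
  have hcont : ContinuousAt (fun x => f x c) x₀ :=
    (hf.continuousAt (hU.mem_nhds hcU)).comp (f := fun x => (x, c)) (by fun_prop)
  filter_upwards [nhdsWithin_le_nhds (hcont.eventually (isOpen_Iio.mem_nhds hfc)),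
    nhdsWithin_le_nhds hu, self_mem_nhdsWithin] with x hfx hxu hxs
  have : c < g x := ((hmono x hxs).lt_iff_lt (huv ⟨hxu, hcv⟩) (hgU x hxs)).1
    (hfx.trans_eq (hg x hxs).symm)
  exact hl.1.trans_lt (hlc.trans this)

theorem continuousOn_of_apply_eq_of_strictMonoOn (hU : IsOpen U)
    (hf : ContinuousOn (Function.uncurry f) U)
    (hmono : ∀ x ∈ s, StrictMonoOn (f x) {y | (x, y) ∈ U})
    (hgU : ∀ x ∈ s, (x, g x) ∈ U) (hg : ∀ x ∈ s, f x (g x) = p) : ContinuousOn g s :=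
  fun _ hx₀ => tendsto_order.2
    ⟨fun _ ha => eventually_lt_of_apply_eq_of_strictMonoOn hU hf hmono hgU hg hx₀ ha,
     fun _ ha => eventually_lt_of_apply_eq_of_strictMonoOn (α := αᵒᵈ) (β := βᵒᵈ) hU hf
      (fun x hx => (hmono x hx).dual) hgU hg hx₀ ha⟩

end ImplicitRoot

theorem bisectorLength_eq {A B C : EuclideanSpace ℝ (Fin 2)} (h : A ≠ B) :
    bisectorLength A B C =
      2 * dist A B * dist A C * cos (∠ B A C / 2) / (dist A B + dist A C) := by
  set m := dist A C
  set n := dist A B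
  have hn : 0 < n := dist_pos.2 h
  have hm : 0 ≤ m := dist_nonneg
  have hcos : 0 ≤ cos (∠ B A C / 2) := cos_nonneg_of_neg_pi_div_two_le_of_le
    (by linarith [angle_nonneg B A C, pi_pos]) (by linarith [angle_le_pi B A C])
  have hinner : ⟪A - B, A - C⟫ = n * m * cos (∠ B A C) := by
    rw [← neg_sub B A, ← neg_sub C A, inner_neg_neg,
      ← InnerProductGeometry.cos_angle_mul_norm_mul_norm]
    simp only [m, n, dist_eq_norm', EuclideanGeometry.angle, vsub_eq_sub]
    ring
  have hD : A - ((m / (m + n)) • B + (n / (m + n)) • C) =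
      (m + n)⁻¹ • (m • (A - B) + n • (A - C)) := by
    rw [smul_add, smul_smul, smul_smul, smul_sub, smul_sub, ← div_eq_inv_mul, ← div_eq_inv_mul]
    have : A = (m / (m + n)) • A + (n / (m + n)) • A := by
      rw [← add_smul, ← add_div, div_self (by positivity), one_smul]
    conv_lhs => rw [this]
    abel
  have hsq : ‖m • (A - B) + n • (A - C)‖ ^ 2 = (2 * n * m * cos (∠ B A C / 2)) ^ 2 := by
    rw [norm_add_sq_real, norm_smul, norm_smul, real_inner_smul_left, real_inner_smul_right,
      hinner, ← dist_eq_norm, ← dist_eq_norm, norm_of_nonneg hm, norm_of_nonneg hn.le]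
    have := cos_sq (∠ B A C / 2)
    rw [mul_div_cancel₀ _ two_ne_zero] at this
    linear_combination (-(4 * n ^ 2 * m ^ 2)) * this
  rw [bisectorLength, dist_comm C A, dist_eq_norm, hD, norm_smul, norm_inv,
    norm_of_nonneg (by positivity), (sq_eq_sq₀ (norm_nonneg _) (by positivity)).1 hsq,
    add_comm m n]
  field_simp

theorem sin_sq_eq_of_add_add_eq_pi {α β γ : ℝ} (h : α + β + γ = π) :
    sin α ^ 2 = sin β ^ 2 + sin γ ^ 2 - 2 * sin β * sin γ * cos α := by
  obtain rfl : α = π - (β + γ) := by linarith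
  rw [sin_pi_sub, cos_pi_sub, sin_add, cos_add]
  linear_combination sin β ^ 2 * sin_sq_add_cos_sq γ + sin γ ^ 2 * sin_sq_add_cos_sq β

/-- The bisector from the third vertex of a triangle with circumdiameter `1` whose other two
angles are `β` and `γ`. -/
noncomputable def bisectorOfAngles (β γ : ℝ) : ℝ := sin β * sin γ / cos ((β - γ) / 2)

theorem bisectorOfAngles_comm (β γ : ℝ) : bisectorOfAngles β γ = bisectorOfAngles γ β := by
  rw [bisectorOfAngles, bisectorOfAngles, mul_comm, ← neg_sub, neg_div, cos_neg]

theorem bisectorOfAngles_pos {β γ : ℝ} (hβ : 0 < β) (hγ : 0 < γ) (h : β + γ < π) :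
    0 < bisectorOfAngles β γ := by
  have := sin_pos_of_pos_of_lt_pi hβ (by linarith)
  have := sin_pos_of_pos_of_lt_pi hγ (by linarith)
  have := cos_pos_of_mem_Ioo (x := (β - γ) / 2) ⟨by linarith, by linarith⟩
  unfold bisectorOfAngles
  positivity

theorem bisectorOfAngles_div_bisectorOfAngles {x y z : ℝ} (hy : sin y ≠ 0) :
    bisectorOfAngles x y / bisectorOfAngles y z =
      sin x * cos ((y - z) / 2) / (sin z * cos ((x - y) / 2)) := by
  rw [bisectorOfAngles, bisectorOfAngles, div_div_div_eq,
    show sin x * sin y * cos ((y - z) / 2) = sin y * (sin x * cos ((y - z) / 2)) by ring,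
    show cos ((x - y) / 2) * (sin y * sin z) = sin y * (sin z * cos ((x - y) / 2)) by ring,
    mul_div_mul_left _ _ hy]

theorem continuousOn_bisectorOfAngles :
    ContinuousOn (Function.uncurry bisectorOfAngles) {x | 0 < x.1 ∧ 0 < x.2 ∧ x.1 + x.2 < π} := by
  rintro ⟨β, γ⟩ ⟨hβ, hγ, h⟩
  have : cos ((β - γ) / 2) ≠ 0 := (cos_pos_of_mem_Ioo ⟨by linarith, by linarith⟩).ne'
  unfold Function.uncurry bisectorOfAngles
  exact ContinuousAt.continuousWithinAt (by fun_prop (disch := exact this))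

section Triangle

variable {A B C : EuclideanSpace ℝ (Fin 2)} {α β γ s : ℝ}

theorem angle_eq_of_dist_eq_mul_sin (hα : 0 < α) (hβ : 0 < β) (hγ : 0 < γ)
    (hsum : α + β + γ = π) (hs : 0 < s) (hBC : dist B C = s * sin α)
    (hAC : dist A C = s * sin β) (hAB : dist A B = s * sin γ) : ∠ B A C = α := by
  have hsβ := sin_pos_of_pos_of_lt_pi hβ (by linarith)
  have hsγ := sin_pos_of_pos_of_lt_pi hγ (by linarith)
  have hcos : cos (∠ B A C) = cos α := by
    have hlaw := law_cos B A C
    rw [dist_comm B A, dist_comm C A, hBC, hAC, hAB] at hlaw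
    have hne : s ^ 2 * sin β * sin γ ≠ 0 := by positivity
    apply mul_left_cancel₀ hne
    linear_combination (1 / 2) * hlaw - (s ^ 2 / 2) * sin_sq_eq_of_add_add_eq_pi hsum
  exact injOn_cos ⟨angle_nonneg _ _ _, angle_le_pi _ _ _⟩ ⟨hα.le, by linarith⟩ hcos

theorem bisectorLength_eq_mul_bisectorOfAngles (hα : 0 < α) (hβ : 0 < β) (hγ : 0 < γ)
    (hsum : α + β + γ = π) (hs : 0 < s) (hA : ∠ B A C = α)
    (hAC : dist A C = s * sin β) (hAB : dist A B = s * sin γ) :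
    bisectorLength A B C = s * bisectorOfAngles β γ := by
  have hsγ := sin_pos_of_pos_of_lt_pi hγ (by linarith)
  have hsh := sin_pos_of_pos_of_lt_pi (x := (β + γ) / 2) (by linarith) (by linarith)
  have hch := cos_pos_of_mem_Ioo (x := (β - γ) / 2) ⟨by linarith, by linarith⟩
  have hhalf : cos (α / 2) = sin ((β + γ) / 2) := by
    rw [← cos_pi_div_two_sub]
    congr 1
    linarith
  rw [bisectorLength_eq (dist_pos.1 (hAB ▸ by positivity)), hA, hAC, hAB, hhalf,
    ← mul_add, add_comm (sin γ), sin_add_sin, bisectorOfAngles]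
  field_simp

theorem exists_dist_eq_mul_sin (hα : 0 < α) (hβ : 0 < β) (hγ : 0 < γ)
    (hsum : α + β + γ = π) (hs : 0 < s) :
    ∃ A B C : EuclideanSpace ℝ (Fin 2),
      dist B C = s * sin α ∧ dist A C = s * sin β ∧ dist A B = s * sin γ := by
  have hsα := sin_pos_of_pos_of_lt_pi hα (by linarith)
  have hsβ := sin_pos_of_pos_of_lt_pi hβ (by linarith)
  have hsγ := sin_pos_of_pos_of_lt_pi hγ (by linarith)
  have hdist (x y x' y' : ℝ) : dist !₂[x, y] !₂[x', y'] = √((x - x') ^ 2 + (y - y') ^ 2) := by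
    simp [EuclideanSpace.dist_eq, Fin.sum_univ_two, Real.dist_eq, sq_abs]
  refine ⟨!₂[0, 0], !₂[s * sin γ, 0], !₂[s * sin β * cos α, s * sin β * sin α], ?_, ?_, ?_⟩
    <;> rw [hdist, sqrt_eq_iff_eq_sq (by positivity) (by positivity)]
  · linear_combination (-s ^ 2) * sin_sq_eq_of_add_add_eq_pi hsum
      + (s ^ 2 * sin β ^ 2) * sin_sq_add_cos_sq α
  · linear_combination (s ^ 2 * sin β ^ 2) * sin_sq_add_cos_sq α
  · ring

theorem exists_triangle_of_angles (hα : 0 < α) (hβ : 0 < β) (hγ : 0 < γ)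
    (hsum : α + β + γ = π) (hs : 0 < s) :
    ∃ A B C : EuclideanSpace ℝ (Fin 2),
      ¬ Collinear ℝ ({A, B, C} : Set (EuclideanSpace ℝ (Fin 2))) ∧
      ∠ B A C = α ∧ ∠ C B A = β ∧ ∠ A C B = γ ∧
      bisectorLength A B C = s * bisectorOfAngles β γ ∧
      bisectorLength B C A = s * bisectorOfAngles γ α ∧
      bisectorLength C A B = s * bisectorOfAngles α β := by
  obtain ⟨A, B, C, hBC, hAC, hAB⟩ := exists_dist_eq_mul_sin hα hβ hγ hsum hs
  have hsum' : β + γ + α = π := by linarith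
  have hsum'' : γ + α + β = π := by linarith
  have hA : ∠ B A C = α := angle_eq_of_dist_eq_mul_sin hα hβ hγ hsum hs hBC hAC hAB
  have hB : ∠ C B A = β := angle_eq_of_dist_eq_mul_sin hβ hγ hα hsum' hs
    (by rwa [dist_comm]) (by rwa [dist_comm]) hBC
  have hC : ∠ A C B = γ := angle_eq_of_dist_eq_mul_sin hγ hα hβ hsum'' hs hAB
    (by rwa [dist_comm]) (by rwa [dist_comm])
  refine ⟨A, B, C, ?_, hA, hB, hC,
    bisectorLength_eq_mul_bisectorOfAngles hα hβ hγ hsum hs hA hAC hAB,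
    bisectorLength_eq_mul_bisectorOfAngles hβ hγ hα hsum' hs hB (by rwa [dist_comm]) hBC,
    bisectorLength_eq_mul_bisectorOfAngles hγ hα hβ hsum'' hs hC
      (by rwa [dist_comm]) (by rwa [dist_comm])⟩
  have hsα := sin_pos_of_pos_of_lt_pi hα (by linarith)
  have hsγ := sin_pos_of_pos_of_lt_pi hγ (by linarith)
  rw [collinear_iff_eq_or_eq_or_angle_eq_zero_or_angle_eq_pi, angle_comm, hB]
  simp only [not_or]
  exact ⟨dist_pos.1 (hAB ▸ by positivity), dist_pos.1 (dist_comm B C ▸ hBC ▸ by positivity),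
    hβ.ne', by linarith⟩

end Triangle

/-- `t_A / t_B` for the triangle with angles `b` at `B` and `c` at `C`. -/
noncomputable def bisectorRatioA (b c : ℝ) : ℝ :=
  bisectorOfAngles b c / bisectorOfAngles c (π - b - c)

/-- `t_C / t_B` for the triangle with angles `b` at `B` and `c` at `C`. -/
noncomputable def bisectorRatioC (b c : ℝ) : ℝ :=
  bisectorOfAngles (π - b - c) b / bisectorOfAngles c (π - b - c)

theorem bisectorRatioA_eq {b c : ℝ} (hc : sin c ≠ 0) :
    bisectorRatioA b c = sin b * sin (b / 2 + c) / (sin (b + c) * cos ((b - c) / 2)) := by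
  have hcos : cos ((c - (π - b - c)) / 2) = sin (b / 2 + c) := by
    rw [← cos_pi_div_two_sub, ← cos_neg]
    ring_nf
  rw [bisectorRatioA, bisectorOfAngles_div_bisectorOfAngles hc, hcos, sub_sub, sin_pi_sub]

theorem bisectorRatioC_eq {b c : ℝ} (h : sin (b + c) ≠ 0) :
    bisectorRatioC b c = sin b * sin (b / 2 + c) / (sin c * sin (b + c / 2)) := by
  have hα : sin (π - b - c) ≠ 0 := by rwa [sub_sub, sin_pi_sub]
  have hcos₁ : cos ((π - b - c - c) / 2) = sin (b / 2 + c) := by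
    rw [← cos_pi_div_two_sub]
    ring_nf
  have hcos₂ : cos ((b - (π - b - c)) / 2) = sin (b + c / 2) := by
    rw [← cos_pi_div_two_sub, ← cos_neg]
    ring_nf
  rw [bisectorRatioC, bisectorOfAngles_comm, bisectorOfAngles_comm c,
    bisectorOfAngles_div_bisectorOfAngles hα, hcos₁, hcos₂]

theorem bisectorRatioA_eq_one {b : ℝ} (hb : 0 < b) (h : 2 * b < π) :
    bisectorRatioA b (π - 2 * b) = 1 := by
  rw [bisectorRatioA, show π - b - (π - 2 * b) = b by ring, bisectorOfAngles_comm,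
    div_self (bisectorOfAngles_pos (by linarith) hb (by linarith)).ne']

theorem bisectorRatioA_eq_bisectorRatioC (b : ℝ) :
    bisectorRatioA b ((π - b) / 2) = bisectorRatioC b ((π - b) / 2) := by
  rw [bisectorRatioA, bisectorRatioC, show π - b - (π - b) / 2 = (π - b) / 2 by ring,
    bisectorOfAngles_comm b]

theorem continuousOn_bisectorRatioA :
    ContinuousOn (Function.uncurry bisectorRatioA) {x | 0 < x.1 ∧ 0 < x.2 ∧ x.1 + x.2 < π} :=
  ContinuousOn.div
    (continuousOn_bisectorOfAngles.comp (by fun_prop) fun _ h => h)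
    (continuousOn_bisectorOfAngles.comp (f := fun x : ℝ × ℝ => (x.2, π - x.1 - x.2))
      (by fun_prop) fun _ ⟨_, h₂, h₃⟩ => ⟨h₂, by linarith, by linarith⟩)
    fun _ ⟨_, h₂, h₃⟩ => (bisectorOfAngles_pos h₂ (by linarith) (by linarith)).ne'

theorem continuousOn_bisectorRatioC :
    ContinuousOn (Function.uncurry bisectorRatioC) {x | 0 < x.1 ∧ 0 < x.2 ∧ x.1 + x.2 < π} :=
  ContinuousOn.div
    (continuousOn_bisectorOfAngles.comp (f := fun x : ℝ × ℝ => (π - x.1 - x.2, x.1))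
      (by fun_prop) fun _ ⟨h₁, h₂, h₃⟩ => ⟨by linarith, h₁, by linarith⟩)
    (continuousOn_bisectorOfAngles.comp (f := fun x : ℝ × ℝ => (x.2, π - x.1 - x.2))
      (by fun_prop) fun _ ⟨_, h₂, h₃⟩ => ⟨h₂, by linarith, by linarith⟩)
    fun _ ⟨_, h₂, h₃⟩ => (bisectorOfAngles_pos h₂ (by linarith) (by linarith)).ne'

theorem sin_add_mul_sin_sub_sin_add_mul_sin (u v w : ℝ) :
    sin (u + w) * sin (2 * u + v) - sin (u + v) * sin (2 * u + w) = sin (w - v) * sin u := by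
  simp only [two_mul, sin_add, cos_add, sin_sub]
  linear_combination (sin u * (sin w * cos v - cos w * sin v)) * sin_sq_add_cos_sq u

theorem strictMonoOn_bisectorRatioA {b : ℝ} (hb : 0 < b) :
    StrictMonoOn (bisectorRatioA b) (Ico b (π - b)) := by
  intro c₁ ⟨hc₁, _⟩ c₂ ⟨_, hc₂⟩ hlt
  have hcos {x : ℝ} (h₀ : b ≤ x) (hπ : x < π - b) : 0 < cos ((b - x) / 2) :=
    cos_pos_of_mem_Ioo ⟨by linarith, by linarith⟩
  have hsb := sin_pos_of_pos_of_lt_pi hb (by linarith)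
  have hsb₂ := sin_pos_of_pos_of_lt_pi (x := b / 2 + c₂) (by linarith) (by linarith)
  have hsbc₁ := sin_pos_of_pos_of_lt_pi (x := b + c₁) (by linarith) (by linarith)
  have hsbc₂ := sin_pos_of_pos_of_lt_pi (x := b + c₂) (by linarith) (by linarith)
  have hratio : sin (b / 2 + c₁) / sin (b + c₁) < sin (b / 2 + c₂) / sin (b + c₂) := by
    have key := sin_add_mul_sin_sub_sin_add_mul_sin (b / 2) c₁ c₂
    rw [show 2 * (b / 2) = b by ring] at key
    have := mul_pos (sin_pos_of_pos_of_lt_pi (x := c₂ - c₁) (by linarith) (by linarith))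
      (sin_pos_of_pos_of_lt_pi (x := b / 2) (by linarith) (by linarith))
    rw [div_lt_div_iff₀ hsbc₁ hsbc₂]
    linarith
  have hcos_le : cos ((b - c₂) / 2) ≤ cos ((b - c₁) / 2) := by
    rw [← cos_neg, ← cos_neg ((b - c₁) / 2)]
    exact cos_le_cos_of_nonneg_of_le_pi (by linarith) (by linarith) (by linarith)
  have hform {c : ℝ} (h₀ : b ≤ c) (hπ : c < π - b) :
      bisectorRatioA b c = sin b * (sin (b / 2 + c) / sin (b + c)) / cos ((b - c) / 2) := by
    rw [bisectorRatioA_eq (sin_pos_of_pos_of_lt_pi (by linarith) (by linarith)).ne']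
    field_simp
  rw [hform hc₁ (by linarith), hform (by linarith) hc₂]
  calc sin b * (sin (b / 2 + c₁) / sin (b + c₁)) / cos ((b - c₁) / 2)
      < sin b * (sin (b / 2 + c₂) / sin (b + c₂)) / cos ((b - c₁) / 2) := by
        gcongr
        exact hcos hc₁ (by linarith)
    _ ≤ sin b * (sin (b / 2 + c₂) / sin (b + c₂)) / cos ((b - c₂) / 2) := by
        gcongr
        exact hcos (by linarith) hc₂

theorem bisectorRatioC_le_four_mul_sin {b c : ℝ} (hb : 0 < b) (hc₁ : π - b ≤ 2 * c)
    (hc₂ : c ≤ π - 2 * b) : bisectorRatioC b c ≤ 4 * sin b := by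
  have hsb : 0 < sin b := sin_pos_of_pos_of_lt_pi hb (by linarith)
  have hsc : 0 < sin c := sin_pos_of_pos_of_lt_pi (by linarith) (by linarith)
  have hsc_ge : sin (b / 2) ≤ sin c := by
    rw [← sub_nonneg, sin_sub_sin]
    have := sin_nonneg_of_nonneg_of_le_pi (x := (c - b / 2) / 2) (by linarith) (by linarith)
    have := cos_nonneg_of_neg_pi_div_two_le_of_le (x := (c + b / 2) / 2)
      (by linarith) (by linarith)
    positivity
  have hnum : sin (b / 2 + c) ≤ 2 * sin c := by
    have := sin_nonneg_of_nonneg_of_le_pi (x := b / 2) (by linarith) (by linarith)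
    calc sin (b / 2 + c) = sin c * cos (b / 2) + cos c * sin (b / 2) := by rw [add_comm, sin_add]
      _ ≤ sin c * 1 + 1 * sin (b / 2) := by gcongr <;> exact cos_le_one _
      _ ≤ 2 * sin c := by linarith
  have hden : 1 / 2 ≤ sin (b + c / 2) := by
    rw [← sin_pi_div_six]
    exact strictMonoOn_sin.monotoneOn ⟨by linarith, by linarith⟩ ⟨by linarith, by linarith⟩
      (by linarith)
  rw [bisectorRatioC_eq (sin_pos_of_pos_of_lt_pi (by linarith) (by linarith)).ne',
    div_le_iff₀ (by positivity)]
  calc sin b * sin (b / 2 + c) ≤ sin b * (2 * sin c) := by gcongr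
    _ = 4 * sin b * (sin c * (1 / 2)) := by ring
    _ ≤ 4 * sin b * (sin c * sin (b + c / 2)) := by gcongr

theorem exists_continuousOn_bisectorRatioA_eq {p b₀ b₁ : ℝ} (hb₀ : 0 < b₀) (hb₁ : b₁ < π / 3)
    (hp : p < 1) (hE : ∀ b ∈ Icc b₀ b₁, bisectorRatioA b ((π - b) / 2) ≤ p) :
    ∃ Γ : ℝ → ℝ, ContinuousOn Γ (Icc b₀ b₁) ∧
      ∀ b ∈ Icc b₀ b₁, Γ b ∈ Icc ((π - b) / 2) (π - 2 * b) ∧ bisectorRatioA b (Γ b) = p := by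
  have hroot : ∀ b ∈ Icc b₀ b₁,
      ∃ c ∈ Icc ((π - b) / 2) (π - 2 * b), bisectorRatioA b c = p := by
    intro b ⟨hb, hb'⟩
    refine intermediate_value_Icc (by linarith) ?_
      ⟨hE b ⟨hb, hb'⟩, (bisectorRatioA_eq_one (by linarith) (by linarith)).symm ▸ hp.le⟩
    exact continuousOn_bisectorRatioA.comp (f := fun c => (b, c)) (by fun_prop)
      fun c hc => ⟨by linarith, by linarith [hc.1], by linarith [hc.2]⟩
  choose! Γ hΓ hΓp using hroot
  refine ⟨Γ, continuousOn_of_apply_eq_of_strictMonoOn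
    (U := {x | 0 < x.1 ∧ x.1 < x.2 ∧ x.1 + x.2 < π}) ?_ ?_ ?_ ?_ hΓp,
    fun b hb => ⟨hΓ b hb, hΓp b hb⟩⟩
  · exact (isOpen_lt continuous_const continuous_fst).inter
      ((isOpen_lt continuous_fst continuous_snd).inter
        (isOpen_lt (continuous_fst.add continuous_snd) continuous_const))
  · exact continuousOn_bisectorRatioA.mono fun x ⟨h₁, h₂, h₃⟩ => ⟨h₁, by linarith, h₃⟩
  · exact fun b ⟨hb, _⟩ => (strictMonoOn_bisectorRatioA (by linarith)).mono
      fun c ⟨_, hc, hc'⟩ => ⟨hc.le, by linarith⟩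
  · exact fun b hb => ⟨by linarith [hb.1], by linarith [(hΓ b hb).1, hb.2],
      by linarith [(hΓ b hb).2, hb.1]⟩

theorem exists_bisectorRatio_eq {p q : ℝ} (hq : 0 < q) (hqp : q < p) (hp : p < 1) :
    ∃ b c, 0 < b ∧ π - b < 2 * c ∧ c < π - 2 * b ∧
      bisectorRatioA b c = p ∧ bisectorRatioC b c = q := by
  obtain ⟨b₀, hb₀, hb₀π, hb₀q⟩ : ∃ b₀, 0 < b₀ ∧ b₀ ≤ π / 6 ∧ b₀ ≤ q / 8 :=
    ⟨min (π / 6) (q / 8), by positivity, min_le_left _ _, min_le_right _ _⟩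
  have hsmall : ∀ c ∈ Icc ((π - b₀) / 2) (π - 2 * b₀), bisectorRatioC b₀ c < q := fun c hc =>
    (bisectorRatioC_le_four_mul_sin hb₀ (by linarith [hc.1]) hc.2).trans_lt
      (by linarith [sin_le hb₀.le])
  have hEcont : ContinuousOn (fun b => bisectorRatioA b ((π - b) / 2)) (Icc b₀ (π / 3)) :=
    continuousOn_bisectorRatioA.comp (f := fun b => (b, (π - b) / 2)) (by fun_prop)
      fun b ⟨h₁, h₂⟩ => show 0 < b ∧ 0 < (π - b) / 2 ∧ b + (π - b) / 2 < π by
        refine ⟨?_, ?_, ?_⟩ <;> linarith [pi_pos]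
  have hE₁ : bisectorRatioA (π / 3) ((π - π / 3) / 2) = 1 := by
    rw [show (π - π / 3) / 2 = π - 2 * (π / 3) by ring]
    exact bisectorRatioA_eq_one (by positivity) (by linarith [pi_pos])
  have hEb₀ : bisectorRatioA b₀ ((π - b₀) / 2) < p := by
    rw [bisectorRatioA_eq_bisectorRatioC]
    exact (hsmall _ ⟨le_rfl, by linarith⟩).trans hqp
  obtain ⟨b₁, ⟨hb₀₁, hb₁⟩, hEb₁, hEbelow⟩ := hEcont.exists_mem_Ioc_eq_and_forall_lt
    (by linarith) hEb₀ (by rw [hE₁]; exact hp.le)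
  have hb₁' : b₁ < π / 3 := hb₁.lt_of_ne fun h => by rw [h, hE₁] at hEb₁; linarith
  obtain ⟨Γ, hΓcont, hΓ⟩ := exists_continuousOn_bisectorRatioA_eq hb₀ hb₁' hp fun b hb =>
    hb.2.eq_or_lt.elim (fun h => by rw [h, hEb₁]) fun h => (hEbelow b ⟨hb.1, h⟩).le
  have hΓb₁ : Γ b₁ = (π - b₁) / 2 := by
    obtain ⟨⟨hlo, hhi⟩, hΓp⟩ := hΓ b₁ ⟨hb₀₁.le, le_rfl⟩
    exact (strictMonoOn_bisectorRatioA (by linarith)).injOn ⟨by linarith, by linarith⟩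
      ⟨by linarith, by linarith⟩ (hΓp.trans hEb₁.symm)
  have hHcont : ContinuousOn (fun b => bisectorRatioC b (Γ b)) (Icc b₀ b₁) :=
    continuousOn_bisectorRatioC.comp (f := fun b => (b, Γ b)) (continuousOn_id.prodMk hΓcont)
      fun b hb => show 0 < b ∧ 0 < Γ b ∧ b + Γ b < π by
        have := hΓ b hb
        refine ⟨?_, ?_, ?_⟩ <;> linarith [hb.1, hb.2, this.1.1, this.1.2]
  have hHb₁ : bisectorRatioC b₁ (Γ b₁) = p := by
    rw [hΓb₁, ← bisectorRatioA_eq_bisectorRatioC, hEb₁]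
  obtain ⟨b, hb, hHb⟩ := intermediate_value_Icc hb₀₁.le hHcont
    ⟨(hsmall _ (hΓ b₀ ⟨le_rfl, hb₀₁.le⟩).1).le, by rw [hHb₁]; exact hqp.le⟩
  simp only at hHb
  obtain ⟨⟨hlo, hhi⟩, hΓp⟩ := hΓ b hb
  refine ⟨b, Γ b, by linarith [hb.1], ?_, ?_, hΓp, hHb⟩
  · refine lt_of_le_of_ne (by linarith) fun h => hqp.ne ?_
    rw [← hHb, ← hΓp, show Γ b = (π - b) / 2 by linarith, bisectorRatioA_eq_bisectorRatioC]
  · refine hhi.lt_of_ne fun h => hp.ne ?_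
    rw [← hΓp, h, bisectorRatioA_eq_one (by linarith [hb.1]) (by linarith [hb.2])]

theorem exists_triangle_prescribed_bisectors_with_angle_ordering (l₁ l₂ l₃ : ℝ)
    (h₃ : 0 < l₃) (h₃₂ : l₃ < l₂) (h₂₁ : l₂ < l₁) :
    ∃ A B C : EuclideanSpace ℝ (Fin 2), ¬ Collinear ℝ ({A, B, C} : Set (EuclideanSpace ℝ (Fin 2))) ∧
      bisectorLength A B C = l₂ ∧ bisectorLength B C A = l₁ ∧ bisectorLength C A B = l₃ ∧
      ∠ A B C < ∠ B A C ∧ ∠ B A C < ∠ B C A := by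
  have hl₁ : 0 < l₁ := by linarith
  obtain ⟨b, c, hb, hac, hba, hA, hC⟩ := exists_bisectorRatio_eq (div_pos h₃ hl₁)
    (div_lt_div_of_pos_right h₃₂ hl₁) ((div_lt_one hl₁).2 h₂₁)
  have hw : 0 < bisectorOfAngles c (π - b - c) :=
    bisectorOfAngles_pos (by linarith) (by linarith) (by linarith)
  obtain ⟨A, B, C, hABC, hAa, hBb, hCc, htA, htB, htC⟩ :=
    exists_triangle_of_angles (α := π - b - c) (β := b) (γ := c)
      (s := l₁ / bisectorOfAngles c (π - b - c)) (by linarith) hb (by linarith) (by ring)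
      (by positivity)
  rw [bisectorRatioA] at hA
  rw [bisectorRatioC] at hC
  refine ⟨A, B, C, hABC, ?_, ?_, ?_, ?_, ?_⟩
  · rw [htA]; field_simp at hA ⊢; linarith
  · rw [htB]; field_simp
  · rw [htC]; field_simp at hC ⊢; linarith
  · rw [angle_comm, hBb, hAa]; linarith
  · rw [angle_comm B C A, hCc, hAa]; linarith
end
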